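/- arXiv:2106.15933 — 5 statements merged into one kernel-verified Lean document; each statement's English description precedes it below -/
import Mathlib

section
/- Let H : ℝ^P → ℝ be a twice-differentiable k-homogeneous function (k ≥ 2) and let ρ ∈ S^{P−1} satisfy ∇H(ρ) = −sρ with s > 0. Then: for k = 2 and any T ∈ ℝ, the path θ(t) = e^{s(t+T)}ρ defined on all of ℝ solves θ'(t) = −∇H(θ(t)) and θ(t) → 0 as t → −∞; for k > 2 and any T ∈ ℝ, the path θ(t) = ((k−2)s(T−t))^{−1/(k−2)}ρ defined on (−∞, T) solves θ'(t) = −∇H(θ(t)) and θ(t) → 0 as t → −∞. -/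
/-!
Homogeneity of degree `k` makes `∇H` homogeneous of degree `k - 1`, so along the ray through an
escape direction `∇H(c ρ) = -s c^(k-1) ρ`. The gradient flow `θ' = -∇H(θ)` therefore restricts to
the ray as the scalar equation `c' = s c^(k-1)`, whose explicit positive solutions are
`e^(s(t+T))` for `k = 2` and `((k-2) s (T-t))^(-1/(k-2))` for `k > 2`; both vanish at `-∞`.
-/

open Filter Topology

section Homogeneous

variable {E : Type*} [NormedAddCommGroup E] [InnerProductSpace ℝ E] [CompleteSpace E]
  {H : E → ℝ} {k : ℕ}

/- No differentiability is needed: where `H` is not differentiable, both sides are junk `0`. -/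
theorem gradient_smul_of_homogeneous
    (hhom : ∀ α : ℝ, 0 < α → ∀ θ : E, H (α • θ) = α ^ k * H θ) (hk : 1 ≤ k)
    {α : ℝ} (hα : 0 < α) (θ : E) :
    gradient H (α • θ) = α ^ (k - 1) • gradient H θ := by
  have hfderiv : α • fderiv ℝ H (α • θ) = α ^ k • fderiv ℝ H θ := by
    rw [← fderiv_comp_smul, show (H <| α • ·) = α ^ k • H from funext (hhom α hα),
      fderiv_const_smul_field]
    rfl
  have hgrad : α • gradient H (α • θ) = α ^ k • gradient H θ := by
    simpa [gradient] using congrArg (InnerProductSpace.toDual ℝ E).symm hfderiv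
  rw [← Nat.sub_add_cancel hk, pow_succ', ← smul_smul] at hgrad
  exact smul_right_injective E hα.ne' hgrad

theorem gradient_smul_of_escape
    (hhom : ∀ α : ℝ, 0 < α → ∀ θ : E, H (α • θ) = α ^ k * H θ) (hk : 1 ≤ k)
    {ρ : E} {s : ℝ} (hdir : gradient H ρ = (-s) • ρ) {c : ℝ} (hc : 0 < c) :
    gradient H (c • ρ) = (-(s * c ^ (k - 1))) • ρ := by
  rw [gradient_smul_of_homogeneous hhom hk hc, hdir, smul_smul, mul_neg, mul_comm]

theorem hasDerivAt_neg_gradient_of_escape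
    (hhom : ∀ α : ℝ, 0 < α → ∀ θ : E, H (α • θ) = α ^ k * H θ) (hk : 1 ≤ k)
    {ρ : E} {s : ℝ} (hdir : gradient H ρ = (-s) • ρ) {c : ℝ → ℝ} {t : ℝ} (hct : 0 < c t)
    (hc : HasDerivAt c (s * c t ^ (k - 1)) t) :
    HasDerivAt (fun t => c t • ρ) (-gradient H (c t • ρ)) t := by
  rw [gradient_smul_of_escape hhom hk hdir hct, neg_smul, neg_neg]
  exact hc.smul_const ρ

end Homogeneous

theorem hasDerivAt_exp_mul_add (s T t : ℝ) :
    HasDerivAt (fun t => Real.exp (s * (t + T))) (s * Real.exp (s * (t + T))) t := by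
  simpa [mul_comm] using (((hasDerivAt_id t).add_const T).const_mul s).exp

theorem tendsto_exp_mul_add_atBot {s : ℝ} (hs : 0 < s) (T : ℝ) :
    Tendsto (fun t => Real.exp (s * (t + T))) atBot (𝓝 0) :=
  Real.tendsto_exp_atBot.comp ((tendsto_atBot_add_const_right _ T tendsto_id).const_mul_atBot hs)

theorem hasDerivAt_rpow_mul_sub {q s T t : ℝ} (hq : 0 < q) (hs : 0 < s) (ht : t < T) :
    HasDerivAt (fun t => (q * s * (T - t)) ^ (-(1 / q)))
      (s * ((q * s * (T - t)) ^ (-(1 / q))) ^ (q + 1)) t := by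
  have hu : 0 < q * s * (T - t) := by have := sub_pos.2 ht; positivity
  have hexp : -(1 / q) * (q + 1) = -(1 / q) - 1 := by field_simp; ring
  have := (((hasDerivAt_id' t).const_sub T).const_mul (q * s)).rpow_const (p := -(1 / q))
    (Or.inl hu.ne')
  convert this using 1
  rw [← Real.rpow_mul hu.le, hexp]
  field_simp

theorem tendsto_rpow_mul_sub_atBot {q s : ℝ} (hq : 0 < q) (hs : 0 < s) (T : ℝ) :
    Tendsto (fun t => (q * s * (T - t)) ^ (-(1 / q))) atBot (𝓝 0) := by
  have hsub : Tendsto (fun t : ℝ => T - t) atBot atTop := by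
    simpa [sub_eq_add_neg] using tendsto_atTop_add_const_left atBot T tendsto_neg_atBot_atTop
  exact (tendsto_rpow_neg_atTop (by positivity)).comp (hsub.const_mul_atTop (by positivity))

theorem escape_path_along_escape_direction_general
    (P k : ℕ)
    (H : EuclideanSpace ℝ (Fin P) → ℝ)
    (hhom : ∀ α : ℝ, 0 < α → ∀ θ : EuclideanSpace ℝ (Fin P), H (α • θ) = α ^ k * H θ)
    (ρ : EuclideanSpace ℝ (Fin P)) (s : ℝ) (hs : 0 < s)
    (hdir : gradient H ρ = (-s) • ρ) :
    (k = 2 → ∀ T : ℝ,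
      (∀ t : ℝ, HasDerivAt (fun t : ℝ => Real.exp (s * (t + T)) • ρ)
          (-(gradient H (Real.exp (s * (t + T)) • ρ))) t) ∧
      Filter.Tendsto (fun t : ℝ => Real.exp (s * (t + T)) • ρ) Filter.atBot (nhds 0)) ∧
    (2 < k → ∀ T : ℝ,
      (∀ t : ℝ, t < T → HasDerivAt
          (fun t : ℝ => ((((k : ℝ) - 2) * s * (T - t)) ^ (-(1 / ((k : ℝ) - 2)))) • ρ)
          (-(gradient H (((((k : ℝ) - 2) * s * (T - t)) ^ (-(1 / ((k : ℝ) - 2)))) • ρ))) t) ∧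
      Filter.Tendsto
        (fun t : ℝ => ((((k : ℝ) - 2) * s * (T - t)) ^ (-(1 / ((k : ℝ) - 2)))) • ρ)
        Filter.atBot (nhds 0)) := by
  refine ⟨fun hk T => ?_, fun hk T => ?_⟩
  · subst hk
    refine ⟨fun t => hasDerivAt_neg_gradient_of_escape hhom one_le_two hdir (Real.exp_pos _) ?_,
      by simpa using (tendsto_exp_mul_add_atBot hs T).smul_const ρ⟩
    simpa using hasDerivAt_exp_mul_add s T t
  · have hq : (0 : ℝ) < k - 2 := sub_pos.2 (by exact_mod_cast hk)
    refine ⟨fun t ht => hasDerivAt_neg_gradient_of_escape hhom (by omega) hdir ?_ ?_,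
      by simpa using (tendsto_rpow_mul_sub_atBot hq hs T).smul_const ρ⟩
    · exact Real.rpow_pos_of_pos (by have := sub_pos.2 ht; positivity) _
    · convert hasDerivAt_rpow_mul_sub hq hs ht using 2
      rw [← Real.rpow_natCast, Nat.cast_sub (by omega)]
      ring_nf

/-- **Explicit escape paths along an escape direction.**
If `∇H(ρ) = -s ρ` with `ρ` a unit vector and `s > 0`, then for `k = 2` the path
`t ↦ e^{s(t+T)} ρ` is a gradient flow path of `H` on all of `ℝ` converging to `0` at
`-∞`, and for `k > 2` the path `t ↦ ((k-2) s (T-t))^{-1/(k-2)} ρ` is a gradient flow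
path of `H` on `(-∞, T)` converging to `0` at `-∞`. -/
theorem escape_path_along_escape_direction
    (P k : ℕ) (hk : 2 ≤ k)
    (H : EuclideanSpace ℝ (Fin P) → ℝ) (hH : ContDiff ℝ 2 H)
    (hhom : ∀ α : ℝ, 0 < α → ∀ θ : EuclideanSpace ℝ (Fin P), H (α • θ) = α ^ k * H θ)
    (ρ : EuclideanSpace ℝ (Fin P)) (s : ℝ) (hρ : ‖ρ‖ = 1) (hs : 0 < s)
    (hdir : gradient H ρ = (-s) • ρ) :
    (k = 2 → ∀ T : ℝ,
      (∀ t : ℝ, HasDerivAt (fun t : ℝ => Real.exp (s * (t + T)) • ρ)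
          (-(gradient H (Real.exp (s * (t + T)) • ρ))) t) ∧
      Filter.Tendsto (fun t : ℝ => Real.exp (s * (t + T)) • ρ) Filter.atBot (nhds 0)) ∧
    (2 < k → ∀ T : ℝ,
      (∀ t : ℝ, t < T → HasDerivAt
          (fun t : ℝ => ((((k : ℝ) - 2) * s * (T - t)) ^ (-(1 / ((k : ℝ) - 2)))) • ρ)
          (-(gradient H (((((k : ℝ) - 2) * s * (T - t)) ^ (-(1 / ((k : ℝ) - 2)))) • ρ))) t) ∧
      Filter.Tendsto
        (fun t : ℝ => ((((k : ℝ) - 2) * s * (T - t)) ^ (-(1 / ((k : ℝ) - 2)))) • ρ)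
        Filter.atBot (nhds 0)) :=
  escape_path_along_escape_direction_general P k H hhom ρ s hs hdir
end

section
/- Let C = H + e be a (k,m)-approximately homogeneous cost, and let γ_C and γ_H denote the gradient flows of C and of H respectively. Then for every θ₀ ∈ ℝ^P and every t ≥ 0 there is a finite constant c₁(t) (depending on t and θ₀ but not on α) such that for all α ∈ (0,1]: ‖γ_C(α^{2−k} t, αθ₀) − γ_H(α^{2−k} t, αθ₀)‖ ≤ c₁(t) α². -/
noncomputable section
set_option maxHeartbeats 1000000

open Set Real Topology Filter Metric

/-! ### Auxiliary lemmas -/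

lemma gb_eq (K : NNReal) (ε x : ℝ) : gronwallBound 0 K ε x = ε * gronwallBound 0 K 1 x := by
  by_cases hK : (K:ℝ) = 0 <;> simp [gronwallBound, hK] <;> ring

lemma gb_mono (K : NNReal) (ε : ℝ) (hε : 0 ≤ ε) {x y : ℝ} (hx : 0 ≤ x) (hxy : x ≤ y) :
    gronwallBound 0 K ε x ≤ gronwallBound 0 K ε y := by
  by_cases hK : (K:ℝ) = 0
  · simp [gronwallBound, hK]; nlinarith
  · have hK' : (0:ℝ) < K := lt_of_le_of_ne K.2 (Ne.symm hK)
    simp only [gronwallBound, if_neg hK, zero_mul, zero_add]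
    have : exp ((K:ℝ) * x) ≤ exp ((K:ℝ) * y) := by
      apply exp_le_exp.2; nlinarith
    have hd : 0 ≤ ε / (K:ℝ) := div_nonneg hε hK'.le
    nlinarith

lemma gb_nonneg (K : NNReal) (ε : ℝ) (hε : 0 ≤ ε) {x : ℝ} (hx : 0 ≤ x) :
    0 ≤ gronwallBound 0 K ε x := by
  have := gb_mono K ε hε (le_refl 0) hx
  simpa [gronwallBound_x0] using this

/-- Bootstrapped Grönwall estimate: an approximate solution `f` of the ODE `x' = F x`
starting at the same point as an exact solution `g` stays within the Grönwall bound,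
provided the Grönwall bound stays below the tube radius `ρ` on which everything is
controlled. -/
lemma bootstrap {E : Type*} [NormedAddCommGroup E] [NormedSpace ℝ E]
    (F : E → E) (f g f' : ℝ → E) (T ρ ε : ℝ) (L : NNReal)
    (hT : 0 ≤ T) (hρ : 0 < ρ) (hε : 0 ≤ ε)
    (hf : ∀ s, HasDerivAt f (f' s) s)
    (hg : ∀ s, HasDerivAt g (F (g s)) s)
    (hLip : LipschitzOnWith L F {x | ∃ s ∈ Icc 0 T, dist x (g s) ≤ ρ})
    (hpert : ∀ s ∈ Icc (0:ℝ) T, dist (f s) (g s) ≤ ρ → dist (f' s) (F (f s)) ≤ ε)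
    (h0 : f 0 = g 0)
    (hsmall : gronwallBound 0 L ε T < ρ) :
    ∀ s ∈ Icc (0:ℝ) T, dist (f s) (g s) ≤ gronwallBound 0 L ε s := by
  set S := {x | ∃ s ∈ Icc (0:ℝ) T, dist x (g s) ≤ ρ} with hS
  have hfc : Continuous f := continuous_iff_continuousAt.2 fun s => (hf s).continuousAt
  have hgc : Continuous g := continuous_iff_continuousAt.2 fun s => (hg s).continuousAt
  have hdc : Continuous fun u => dist (f u) (g u) := (hfc.dist hgc)
  set Q := {b | b ∈ Icc (0:ℝ) T ∧ ∀ u ∈ Icc (0:ℝ) b, dist (f u) (g u) ≤ ρ} with hQ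
  have h0Q : (0:ℝ) ∈ Q := by
    refine ⟨⟨le_refl _, hT⟩, fun u hu => ?_⟩
    have : u = 0 := le_antisymm hu.2 hu.1
    simp [this, h0, hρ.le]
  have hbdd : BddAbove Q := ⟨T, fun x hx => hx.1.2⟩
  set b := sSup Q with hb
  have hbmem : b ∈ Icc (0:ℝ) T := ⟨le_csSup hbdd h0Q, csSup_le ⟨0, h0Q⟩ fun x hx => hx.1.2⟩
  have hball : ∀ u ∈ Icc (0:ℝ) b, dist (f u) (g u) ≤ ρ := by
    have hlt : ∀ u ∈ Ico (0:ℝ) b, dist (f u) (g u) ≤ ρ := by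
      intro u hu
      obtain ⟨q, hqQ, hq⟩ := exists_lt_of_lt_csSup ⟨0, h0Q⟩ hu.2
      exact hqQ.2 u ⟨hu.1, hq.le⟩
    intro u hu
    rcases lt_or_eq_of_le hu.2 with h | h
    · exact hlt u ⟨hu.1, h⟩
    · rcases eq_or_lt_of_le hbmem.1 with hb0 | hb0
      · have : u = 0 := by rw [h, ← hb0]
        simp [this, h0, hρ.le]
      · have hcl : b ∈ closure (Ico (0:ℝ) b) := by
          rw [closure_Ico (ne_of_lt hb0)]; exact ⟨hbmem.1, le_refl _⟩
        have hne : (𝓝[Ico (0:ℝ) b] b).NeBot := mem_closure_iff_nhdsWithin_neBot.1 hcl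
        have hten : Filter.Tendsto (fun u => dist (f u) (g u)) (𝓝[Ico (0:ℝ) b] b)
            (𝓝 (dist (f b) (g b))) := (hdc.tendsto b).mono_left nhdsWithin_le_nhds
        have := le_of_tendsto hten (eventually_nhdsWithin_of_forall hlt)
        rw [h]; exact this
  have key : ∀ u ∈ Icc (0:ℝ) b, dist (f u) (g u) ≤ gronwallBound 0 L ε u := by
    have := dist_le_of_approx_trajectories_ODE_of_mem (v := fun _ => F) (s := fun _ => S)
      (K := L) (f := f) (g := g) (f' := f') (g' := fun u => F (g u)) (a := 0) (b := b)
      (εf := ε) (εg := 0) (δ := 0)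
      (fun _ _ => hLip)
      (hfc.continuousOn)
      (fun u _ => (hf u).hasDerivWithinAt)
      (fun u hu => hpert u ⟨hu.1, hu.2.le.trans hbmem.2⟩ (hball u ⟨hu.1, hu.2.le⟩))
      (fun u hu => ⟨u, ⟨hu.1, hu.2.le.trans hbmem.2⟩, hball u ⟨hu.1, hu.2.le⟩⟩)
      (hgc.continuousOn)
      (fun u _ => (hg u).hasDerivWithinAt)
      (fun u _ => by simp)
      (fun u hu => ⟨u, ⟨hu.1, hu.2.le.trans hbmem.2⟩, by simp [hρ.le]⟩)
      (by simp [h0])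
    intro u hu
    simpa using this u hu
  have hbT : b = T := by
    by_contra hne
    have hbT : b < T := lt_of_le_of_ne hbmem.2 hne
    have hdb : dist (f b) (g b) < ρ :=
      lt_of_le_of_lt ((key b ⟨hbmem.1, le_refl _⟩).trans (gb_mono L ε hε hbmem.1 hbmem.2)) hsmall
    have hev : ∀ᶠ u in 𝓝 b, dist (f u) (g u) < ρ :=
      hdc.continuousAt.eventually_lt continuousAt_const hdb
    obtain ⟨δ, hδ, hδ'⟩ := Metric.eventually_nhds_iff.1 hev
    set b' := min T (b + δ / 2) with hb'
    have hbb' : b < b' := lt_min hbT (by linarith)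
    have hb'Q : b' ∈ Q := by
      refine ⟨⟨hbmem.1.trans hbb'.le, min_le_left _ _⟩, fun u hu => ?_⟩
      rcases le_or_gt u b with h | h
      · exact hball u ⟨hu.1, h⟩
      · apply (hδ' (y := u) ?_).le
        have : u ≤ b + δ / 2 := hu.2.trans (min_le_right _ _)
        rw [Real.dist_eq, abs_of_pos (by linarith)]
        linarith
    exact absurd (le_csSup hbdd hb'Q) (not_le.2 hbb')
  intro s hs
  exact key s (by rw [hbT]; exact hs)

/-- If all iterated derivatives of a smooth map up to order `n` vanish at `0`, then
the map is bounded by `M * ‖x‖ ^ (n+1)` on any ball. -/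
lemma taylor_bound (E : Type) [NormedAddCommGroup E] [NormedSpace ℝ E] [FiniteDimensional ℝ E]
    (R : ℝ) : ∀ (n : ℕ) (F : Type) (_ : NormedAddCommGroup F), ∀ (_ : NormedSpace ℝ F),
    ∀ (g : E → F),
    ContDiff ℝ (⊤ : ℕ∞) g → (∀ j, j ≤ n → ‖iteratedFDeriv ℝ j g 0‖ = 0) →
    ∃ M, 0 ≤ M ∧ ∀ x : E, ‖x‖ ≤ R → ‖g x‖ ≤ M * ‖x‖ ^ (n+1) := by
  intro n
  induction n with
  | zero =>
    intro F iF iF2 g hg hv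
    have hg0 : g 0 = 0 := by
      have := hv 0 (le_refl 0)
      rwa [norm_iteratedFDeriv_zero, norm_eq_zero] at this
    have hfc : Continuous (fun x => fderiv ℝ g x) := (hg.fderiv_right (m := (⊤ : ℕ∞)) (by simp)).continuous
    obtain ⟨M, hM⟩ := (isCompact_closedBall (0:E) R).exists_bound_of_continuousOn
      hfc.continuousOn
    refine ⟨max M 0, le_max_right _ _, fun x hx => ?_⟩
    have hxball : x ∈ closedBall (0:E) R := by simpa [Metric.mem_closedBall, dist_eq_norm] using hx
    have := Convex.norm_image_sub_le_of_norm_fderiv_le (f := g) (C := max M 0)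
      (s := closedBall 0 R)
      (fun y _ => hg.differentiable (by simp) y)
      (fun y hy => (hM y hy).trans (le_max_left _ _))
      (convex_closedBall _ _) (Metric.mem_closedBall_self (le_trans (norm_nonneg x) hx)) hxball
    simpa [hg0] using this
  | succ n ih =>
    intro F iF iF2 g hg hv
    obtain ⟨M, hM, hMb⟩ := ih (E →L[ℝ] F) inferInstance inferInstance (fderiv ℝ g)
      (hg.fderiv_right (m := (⊤ : ℕ∞)) (by simp))
      (fun j hj => by
        rw [norm_iteratedFDeriv_fderiv]
        exact hv (j+1) (Nat.succ_le_succ hj))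
    have hg0 : g 0 = 0 := by
      have := hv 0 (Nat.zero_le _)
      rwa [norm_iteratedFDeriv_zero, norm_eq_zero] at this
    refine ⟨M, hM, fun x hx => ?_⟩
    have hxball : x ∈ closedBall (0:E) ‖x‖ := by simp [Metric.mem_closedBall, dist_eq_norm]
    have := Convex.norm_image_sub_le_of_norm_fderiv_le (f := g) (C := M * ‖x‖ ^ (n+1))
      (s := closedBall 0 ‖x‖)
      (fun y _ => hg.differentiable (by simp) y)
      (fun y hy => by
        have hy' : ‖y‖ ≤ ‖x‖ := by simpa [Metric.mem_closedBall, dist_eq_norm] using hy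
        exact (hMb y (hy'.trans hx)).trans (by gcongr))
      (convex_closedBall _ _) (Metric.mem_closedBall_self (norm_nonneg x)) hxball
    calc ‖g x‖ = ‖g x - g 0‖ := by simp [hg0]
    _ ≤ M * ‖x‖ ^ (n+1) * ‖x - 0‖ := this
    _ = M * ‖x‖ ^ (n+2) := by rw [sub_zero]; ring

lemma mvpoly_contDiff (P : ℕ) (p : MvPolynomial (Fin P) ℝ) :
    ContDiff ℝ (⊤ : ℕ∞) (fun x : EuclideanSpace ℝ (Fin P) => MvPolynomial.eval (fun i => x i) p) := by
  induction p using MvPolynomial.induction_on with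
  | C a => simpa using contDiff_const
  | add p q hp hq => simpa [MvPolynomial.eval_add] using hp.add hq
  | mul_X p i hp =>
    simp only [MvPolynomial.eval_mul, MvPolynomial.eval_X]
    have hi : ContDiff ℝ (⊤ : ℕ∞) (EuclideanSpace.proj (𝕜 := ℝ) (ι := Fin P) i) :=
      ContinuousLinearMap.contDiff _
    exact hp.mul hi

lemma gradient_contDiff {P : ℕ} (f : EuclideanSpace ℝ (Fin P) → ℝ) (hf : ContDiff ℝ (⊤ : ℕ∞) f) :
    ContDiff ℝ (⊤ : ℕ∞) (gradient f) := by
  have : gradient f = fun x => (InnerProductSpace.toDual ℝ (EuclideanSpace ℝ (Fin P))).symm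
      (fderiv ℝ f x) := rfl
  rw [this]
  exact (InnerProductSpace.toDual ℝ (EuclideanSpace ℝ (Fin P))).symm.contDiff.comp
    (hf.fderiv_right (m := (⊤ : ℕ∞)) (by simp))

lemma gradient_add' {P : ℕ} (f g : EuclideanSpace ℝ (Fin P) → ℝ)
    (hf : ContDiff ℝ (⊤ : ℕ∞) f) (hg : ContDiff ℝ (⊤ : ℕ∞) g) (x : EuclideanSpace ℝ (Fin P)) :
    gradient (f + g) x = gradient f x + gradient g x := by
  unfold gradient
  have h : (f + g) = fun y => f y + g y := rfl
  rw [h, fderiv_fun_add (hf.differentiable (by simp) x) (hg.differentiable (by simp) x), map_add]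

lemma gradient_homog {P k : ℕ} (H : EuclideanSpace ℝ (Fin P) → ℝ) (hH : ContDiff ℝ (⊤ : ℕ∞) H)
    (hk : 1 ≤ k) (hhom : ∀ α : ℝ, 0 < α → ∀ θ : EuclideanSpace ℝ (Fin P), H (α • θ) = α ^ k * H θ)
    (α : ℝ) (hα : 0 < α) (x : EuclideanSpace ℝ (Fin P)) :
    gradient H (α • x) = α ^ (k - 1) • gradient H x := by
  have hd := hH.differentiable (by simp)
  have h1 : (fun θ : EuclideanSpace ℝ (Fin P) => H (α • θ)) = fun θ => α ^ k * H θ :=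
    funext fun θ => hhom α hα θ
  have h2 : fderiv ℝ (fun θ : EuclideanSpace ℝ (Fin P) => H (α • θ)) x
      = α • fderiv ℝ H (α • x) := by
    have hlin : (fun θ : EuclideanSpace ℝ (Fin P) => α • θ)
        = ⇑(α • ContinuousLinearMap.id ℝ (EuclideanSpace ℝ (Fin P))) := by
      ext θ; simp
    have hsm : DifferentiableAt ℝ (fun θ : EuclideanSpace ℝ (Fin P) => α • θ) x := by
      rw [hlin]; exact (α • ContinuousLinearMap.id ℝ (EuclideanSpace ℝ (Fin P))).differentiableAt
    have hcomp : (fun θ : EuclideanSpace ℝ (Fin P) => H (α • θ)) = H ∘ (fun θ => α • θ) := rfl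
    rw [hcomp, fderiv_comp x (hd _) hsm, hlin, ContinuousLinearMap.fderiv]
    ext v
    simp
  have h3 : fderiv ℝ (fun θ : EuclideanSpace ℝ (Fin P) => α ^ k * H θ) x
      = α ^ k • fderiv ℝ H x := by
    simpa [Pi.smul_def] using fderiv_const_smul (𝕜 := ℝ) (hd x) (α ^ k)
  have h4 : α • fderiv ℝ H (α • x) = α ^ k • fderiv ℝ H x := by rw [← h2, h1, h3]
  have h5 : fderiv ℝ H (α • x) = α ^ (k - 1) • fderiv ℝ H x := by
    have hk1 : α * α ^ (k - 1) = α ^ k := by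
      rw [← pow_succ']
      congr 1
      omega
    have := congrArg (fun L => α⁻¹ • L) h4
    simp only [smul_smul, inv_mul_cancel₀ (ne_of_gt hα), one_smul] at this
    rw [this]
    congr 1
    rw [← hk1, ← mul_assoc, inv_mul_cancel₀ (ne_of_gt hα), one_mul]
  unfold gradient
  rw [h5, map_smul]

lemma lipOnBall {P : ℕ} (G : EuclideanSpace ℝ (Fin P) → EuclideanSpace ℝ (Fin P))
    (hG : ContDiff ℝ (⊤ : ℕ∞) G) (R : ℝ) :
    ∃ L : NNReal, LipschitzOnWith L G (closedBall 0 R) := by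
  have hfc : Continuous (fun x => fderiv ℝ G x) := (hG.fderiv_right (m := (⊤ : ℕ∞)) (by simp)).continuous
  obtain ⟨M, hM⟩ := (isCompact_closedBall (0:EuclideanSpace ℝ (Fin P)) R)
    |>.exists_bound_of_continuousOn hfc.continuousOn
  refine ⟨(max M 0).toNNReal, Convex.lipschitzOnWith_of_nnnorm_fderiv_le
    (fun x _ => hG.differentiable (by simp) x) (fun x hx => ?_) (convex_closedBall _ _)⟩
  rw [← NNReal.coe_le_coe, coe_nnnorm, Real.coe_toNNReal _ (le_max_right _ _)]
  exact (hM x hx).trans (le_max_left _ _)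

/-! ### Main theorem -/

/-- **Gradient flow of an approximately homogeneous cost is close to that of its
homogeneous part.** Let `C = H + e` be `(k,m)`-approximately homogeneous and let
`γ_C, γ_H` be the gradient flows of `C` and `H`. For every `θ₀` and `t ≥ 0` there is
a constant `c₁(t)` (independent of `α`) with
`‖γ_C(α^{2-k} t, α θ₀) - γ_H(α^{2-k} t, α θ₀)‖ ≤ c₁(t) α²` for all `α ∈ (0,1]`. -/
theorem flow_of_approximately_homogeneous_close_to_homogeneous
    (P k m : ℕ) (hk : 2 ≤ k) (hkm : k < m)
    (H e C : EuclideanSpace ℝ (Fin P) → ℝ)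
    (hpoly : ∃ p : MvPolynomial (Fin P) ℝ, ∀ x, H x = MvPolynomial.eval (fun i => x i) p)
    (hhom : ∀ α : ℝ, 0 < α → ∀ θ : EuclideanSpace ℝ (Fin P), H (α • θ) = α ^ k * H θ)
    (hes : ContDiff ℝ (⊤ : ℕ∞) e)
    (hev : ∀ n : ℕ, n ≤ m - 1 → iteratedFDeriv ℝ n e 0 = 0)
    (hC : C = H + e)
    (γC γH : ℝ → EuclideanSpace ℝ (Fin P) → EuclideanSpace ℝ (Fin P))
    (hγC0 : ∀ θ, γC 0 θ = θ) (hγH0 : ∀ θ, γH 0 θ = θ)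
    (hγC : ∀ θ t, HasDerivAt (fun s => γC s θ) (-(gradient C (γC t θ))) t)
    (hγH : ∀ θ t, HasDerivAt (fun s => γH s θ) (-(gradient H (γH t θ))) t) :
    ∀ (θ₀ : EuclideanSpace ℝ (Fin P)) (t : ℝ), 0 ≤ t →
      ∃ c1 : ℝ, ∀ α : ℝ, 0 < α → α ≤ 1 →
        ‖γC (α ^ ((2 : ℝ) - (k : ℝ)) * t) (α • θ₀) -
            γH (α ^ ((2 : ℝ) - (k : ℝ)) * t) (α • θ₀)‖ ≤ c1 * α ^ 2 := by
  have hk1 : 1 ≤ k := by omega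
  -- smoothness
  have hHs : ContDiff ℝ (⊤ : ℕ∞) H := by
    obtain ⟨p, hp⟩ := hpoly
    have h := mvpoly_contDiff P p
    have hHe : H = fun x => MvPolynomial.eval (fun i => x i) p := funext hp
    rwa [← hHe] at h
  have hCs : ContDiff ℝ (⊤ : ℕ∞) C := by
    rw [hC]; exact hHs.add hes
  have hgradsum : ∀ x, gradient C x = gradient H x + gradient e x := by
    intro x; rw [hC]; exact gradient_add' H e hHs hes x
  have hgH := fun (α : ℝ) (hα : 0 < α) x => gradient_homog H hHs hk1 hhom α hα x
  -- coefficient identities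
  have hcoef1 : ∀ α : ℝ, 0 < α → α⁻¹ * α ^ ((2:ℝ) - (k:ℝ)) = α ^ ((1:ℝ) - (k:ℝ)) := by
    intro α hα
    rw [← Real.rpow_neg_one α, ← Real.rpow_add hα]
    congr 1
    ring
  have hcoef2 : ∀ α : ℝ, 0 < α → α ^ ((1:ℝ) - (k:ℝ)) * α ^ (k - 1 : ℕ) = 1 := by
    intro α hα
    rw [← Real.rpow_natCast α (k-1), ← Real.rpow_add hα]
    have : ((k - 1 : ℕ) : ℝ) = (k:ℝ) - 1 := by
      push_cast [Nat.cast_sub hk1]; ring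
    rw [this]
    have h0 : (1:ℝ) - (k:ℝ) + ((k:ℝ) - 1) = 0 := by ring
    rw [h0, Real.rpow_zero]
  have hcoef3 : ∀ α : ℝ, 0 < α → α ^ ((1:ℝ) - (k:ℝ)) * α ^ (k : ℕ) = α := by
    intro α hα
    rw [← Real.rpow_natCast α k, ← Real.rpow_add hα]
    have h0 : (1:ℝ) - (k:ℝ) + (k:ℝ) = 1 := by ring
    rw [h0, Real.rpow_one]
  intro θ₀ t ht
  -- the limiting trajectory
  set v : ℝ → EuclideanSpace ℝ (Fin P) := fun s => γH s θ₀ with hvdef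
  have hv' : ∀ s, HasDerivAt v (-(gradient H (v s))) s := fun s => hγH θ₀ s
  have hvc : Continuous v := continuous_iff_continuousAt.2 fun s => (hv' s).continuousAt
  obtain ⟨B0, hB0⟩ := (isCompact_Icc (a := (0:ℝ)) (b := t)).exists_bound_of_continuousOn
    hvc.continuousOn
  set B := max B0 0 with hBdef
  have hB : ∀ s ∈ Icc (0:ℝ) t, ‖v s‖ ≤ B := fun s hs => (hB0 s hs).trans (le_max_left _ _)
  have hBnn : (0:ℝ) ≤ B := le_max_right _ _
  set R := B + 1 with hRdef
  have hRnn : (0:ℝ) ≤ R := by positivity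
  -- bound on ∇e
  obtain ⟨M, hM0, hMb⟩ := taylor_bound (EuclideanSpace ℝ (Fin P)) R (k-1)
    (EuclideanSpace ℝ (Fin P)) inferInstance inferInstance (gradient e)
    (gradient_contDiff e hes)
    (fun j hj => by
      have h1 : gradient e
          = (⇑(InnerProductSpace.toDual ℝ (EuclideanSpace ℝ (Fin P))).symm) ∘ (fderiv ℝ e) := rfl
      rw [h1, LinearIsometryEquiv.norm_iteratedFDeriv_comp_left, norm_iteratedFDeriv_fderiv,
        hev (j+1) (by omega), norm_zero])
  have hMk : ∀ x : EuclideanSpace ℝ (Fin P), ‖x‖ ≤ R → ‖gradient e x‖ ≤ M * ‖x‖ ^ k := by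
    intro x hx
    have := hMb x hx
    rwa [Nat.sub_add_cancel hk1] at this
  -- Lipschitz bound for -∇H on the big ball
  obtain ⟨L, hL⟩ := lipOnBall (fun x => -(gradient H x)) ((gradient_contDiff H hHs).neg) R
  set c₂ := gronwallBound 0 L 1 t with hc₂def
  have hc₂nn : 0 ≤ c₂ := gb_nonneg L 1 one_pos.le ht
  set α₀ : ℝ := (M * R ^ k * c₂ + 1)⁻¹ with hα₀def
  have hα₀pos : 0 < α₀ := by positivity
  have hα₀le1 : α₀ ≤ 1 := by
    have hq : (0:ℝ) ≤ M * R ^ k * c₂ := by positivity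
    have hinv : α₀ * (M * R ^ k * c₂ + 1) = 1 := inv_mul_cancel₀ (by positivity)
    nlinarith
  -- rescaled flows
  set Φ : ℝ → ℝ → EuclideanSpace ℝ (Fin P) :=
    fun α s => α⁻¹ • γC (α ^ ((2:ℝ) - (k:ℝ)) * s) (α • θ₀) with hΦdef
  set Ψ : ℝ → ℝ → EuclideanSpace ℝ (Fin P) :=
    fun α s => α⁻¹ • γH (α ^ ((2:ℝ) - (k:ℝ)) * s) (α • θ₀) with hΨdef
  have hΦ0 : ∀ α : ℝ, 0 < α → Φ α 0 = θ₀ := by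
    intro α hα
    simp [hΦdef, hγC0, smul_smul, inv_mul_cancel₀ hα.ne']
  have hΨ0 : ∀ α : ℝ, 0 < α → Ψ α 0 = θ₀ := by
    intro α hα
    simp [hΨdef, hγH0, smul_smul, inv_mul_cancel₀ hα.ne']
  have hsmulΦ : ∀ α : ℝ, 0 < α → ∀ s, α • Φ α s = γC (α ^ ((2:ℝ) - (k:ℝ)) * s) (α • θ₀) := by
    intro α hα s
    simp [hΦdef, smul_smul, mul_inv_cancel₀ hα.ne']
  have hsmulΨ : ∀ α : ℝ, 0 < α → ∀ s, α • Ψ α s = γH (α ^ ((2:ℝ) - (k:ℝ)) * s) (α • θ₀) := by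
    intro α hα s
    simp [hΨdef, smul_smul, mul_inv_cancel₀ hα.ne']
  -- derivative of Φ α
  have hΦ' : ∀ α : ℝ, 0 < α → ∀ s,
      HasDerivAt (Φ α) (-(α ^ ((1:ℝ) - (k:ℝ)) • gradient C (α • Φ α s))) s := by
    intro α hα s
    have hc : HasDerivAt (fun u : ℝ => α ^ ((2:ℝ) - (k:ℝ)) * u) (α ^ ((2:ℝ) - (k:ℝ))) s := by
      simpa using (hasDerivAt_id s).const_mul (α ^ ((2:ℝ) - (k:ℝ)))
    have h2 := (HasDerivAt.scomp s (hγC (α • θ₀) (α ^ ((2:ℝ) - (k:ℝ)) * s)) hc).const_smul α⁻¹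
    have h3 : HasDerivAt (Φ α)
        (α⁻¹ • (α ^ ((2:ℝ) - (k:ℝ)) •
          -(gradient C (γC (α ^ ((2:ℝ) - (k:ℝ)) * s) (α • θ₀))))) s := by
      simpa [hΦdef, Function.comp, Pi.smul_def] using h2
    have hval : α⁻¹ • (α ^ ((2:ℝ) - (k:ℝ)) •
        -(gradient C (γC (α ^ ((2:ℝ) - (k:ℝ)) * s) (α • θ₀))))
        = -(α ^ ((1:ℝ) - (k:ℝ)) • gradient C (α • Φ α s)) := by
      rw [← hsmulΦ α hα s, smul_neg, smul_neg, smul_smul, hcoef1 α hα]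
    rwa [hval] at h3
  -- derivative of Ψ α : exact solution of the limit equation
  have hΨ' : ∀ α : ℝ, 0 < α → ∀ s, HasDerivAt (Ψ α) (-(gradient H (Ψ α s))) s := by
    intro α hα s
    have hc : HasDerivAt (fun u : ℝ => α ^ ((2:ℝ) - (k:ℝ)) * u) (α ^ ((2:ℝ) - (k:ℝ))) s := by
      simpa using (hasDerivAt_id s).const_mul (α ^ ((2:ℝ) - (k:ℝ)))
    have h2 := (HasDerivAt.scomp s (hγH (α • θ₀) (α ^ ((2:ℝ) - (k:ℝ)) * s)) hc).const_smul α⁻¹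
    have h3 : HasDerivAt (Ψ α)
        (α⁻¹ • (α ^ ((2:ℝ) - (k:ℝ)) •
          -(gradient H (γH (α ^ ((2:ℝ) - (k:ℝ)) * s) (α • θ₀))))) s := by
      simpa [hΨdef, Function.comp, Pi.smul_def] using h2
    have hval : α⁻¹ • (α ^ ((2:ℝ) - (k:ℝ)) •
        -(gradient H (γH (α ^ ((2:ℝ) - (k:ℝ)) * s) (α • θ₀))))
        = -(gradient H (Ψ α s)) := by
      rw [← hsmulΨ α hα s, smul_neg, smul_neg, smul_smul, hcoef1 α hα,
        hgH α hα (Ψ α s), smul_smul, hcoef2 α hα, one_smul]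
    rwa [hval] at h3
  -- the tube around v is inside the ball of radius R
  have htube : {x : EuclideanSpace ℝ (Fin P) | ∃ s ∈ Icc (0:ℝ) t, dist x (v s) ≤ 1}
      ⊆ closedBall 0 R := by
    rintro x ⟨s, hs, hd⟩
    rw [Metric.mem_closedBall, dist_zero_right]
    have h1 : ‖x‖ ≤ ‖x - v s‖ + ‖v s‖ := by
      have := norm_add_le (x - v s) (v s); simpa using this
    rw [dist_eq_norm] at hd
    have := hB s hs
    rw [hRdef]
    linarith
  -- Step 1: Ψ α agrees with v on [0, t]
  have hΨv : ∀ α : ℝ, 0 < α → ∀ s ∈ Icc (0:ℝ) t, Ψ α s = v s := by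
    intro α hα s hs
    have := bootstrap (fun x => -(gradient H x)) (Ψ α) v
      (fun s => -(gradient H (Ψ α s))) t 1 0 L ht one_pos (le_refl 0)
      (hΨ' α hα) hv' (hL.mono htube)
      (fun s hs _ => by simp)
      (by rw [hΨ0 α hα, hvdef]; exact (hγH0 θ₀).symm)
      (by rw [gronwallBound_ε0_δ0]; norm_num)
    have h2 := this s hs
    rw [gronwallBound_ε0_δ0] at h2
    exact dist_le_zero.1 h2
  -- Step 2: small α estimate
  have hsmallα : ∀ α : ℝ, 0 < α → α ≤ 1 → α ≤ α₀ →
      dist (Φ α t) (v t) ≤ M * R ^ k * c₂ * α := by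
    intro α hα hα1 hαα₀
    have hε : (0:ℝ) ≤ M * R ^ k * α := by positivity
    have hq : (0:ℝ) ≤ M * R ^ k * c₂ := by positivity
    have hcancel : (M * R ^ k * c₂ + 1) * (M * R ^ k * c₂ + 1)⁻¹ = 1 :=
      mul_inv_cancel₀ (by positivity)
    have hsmall : gronwallBound 0 L (M * R ^ k * α) t < 1 := by
      rw [gb_eq, ← hc₂def]
      nlinarith
    have := bootstrap (fun x => -(gradient H x)) (Φ α) v
      (fun s => -(α ^ ((1:ℝ) - (k:ℝ)) • gradient C (α • Φ α s))) t 1 (M * R ^ k * α) L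
      ht one_pos hε (hΦ' α hα) hv' (hL.mono htube)
      (fun s hs hd => by
        -- perturbation estimate
        have hxR : ‖Φ α s‖ ≤ R := by
          have := htube ⟨s, hs, hd⟩
          rwa [Metric.mem_closedBall, dist_zero_right] at this
        have hαxR : ‖α • Φ α s‖ ≤ R := by
          rw [norm_smul, Real.norm_eq_abs, abs_of_pos hα]
          nlinarith
        have hHid : α ^ ((1:ℝ) - (k:ℝ)) • gradient H (α • Φ α s) = gradient H (Φ α s) := by
          rw [hgH α hα (Φ α s), smul_smul, hcoef2 α hα, one_smul]
        have hdiff : -(α ^ ((1:ℝ) - (k:ℝ)) • gradient C (α • Φ α s))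
            - (-(gradient H (Φ α s)))
            = -(α ^ ((1:ℝ) - (k:ℝ)) • gradient e (α • Φ α s)) := by
          rw [hgradsum (α • Φ α s), smul_add, ← hHid]
          abel
        rw [dist_eq_norm, hdiff, norm_neg, norm_smul, Real.norm_eq_abs,
          abs_of_pos (Real.rpow_pos_of_pos hα _)]
        have hge : ‖gradient e (α • Φ α s)‖ ≤ M * (α * ‖Φ α s‖) ^ k := by
          have := hMk (α • Φ α s) hαxR
          rwa [norm_smul, Real.norm_eq_abs, abs_of_pos hα] at this
        calc α ^ ((1:ℝ) - (k:ℝ)) * ‖gradient e (α • Φ α s)‖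
            ≤ α ^ ((1:ℝ) - (k:ℝ)) * (M * (α * ‖Φ α s‖) ^ k) := by
              have hA := Real.rpow_pos_of_pos hα ((1:ℝ) - (k:ℝ))
              exact mul_le_mul_of_nonneg_left hge hA.le
          _ = M * (α ^ ((1:ℝ) - (k:ℝ)) * α ^ (k:ℕ)) * ‖Φ α s‖ ^ k := by
              rw [mul_pow]; ring
          _ = M * α * ‖Φ α s‖ ^ k := by rw [hcoef3 α hα]
          _ ≤ M * R ^ k * α := by
              have hp : ‖Φ α s‖ ^ k ≤ R ^ k := pow_le_pow_left₀ (norm_nonneg _) hxR k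
              nlinarith [mul_le_mul_of_nonneg_left hp (mul_nonneg hM0 hα.le)])
      (by rw [hΦ0 α hα, hvdef]; exact (hγH0 θ₀).symm)
      hsmall
    have h2 := this t ⟨ht, le_refl t⟩
    rw [gb_eq, ← hc₂def] at h2
    calc dist (Φ α t) (v t) ≤ M * R ^ k * α * c₂ := h2
      _ = M * R ^ k * c₂ * α := by ring
  -- Step 3: uniform bound for α ∈ [α₀, 1]
  have hloc : ∀ α₁ ∈ Icc α₀ 1, ∃ U ∈ 𝓝 α₁, ∃ D₁, 0 ≤ D₁ ∧
      ∀ α ∈ U, α ∈ Icc α₀ 1 → ‖Φ α t‖ ≤ D₁ := by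
    intro α₁ hα₁
    have hα₁pos : 0 < α₁ := lt_of_lt_of_le hα₀pos hα₁.1
    -- trajectory bound for Φ α₁
    have hΦ₁c : Continuous (Φ α₁) :=
      continuous_iff_continuousAt.2 fun s => (hΦ' α₁ hα₁pos s).continuousAt
    obtain ⟨B₁0, hB₁0⟩ := (isCompact_Icc (a := (0:ℝ)) (b := t)).exists_bound_of_continuousOn
      hΦ₁c.continuousOn
    set B₁ := max B₁0 0 with hB₁def
    have hB₁ : ∀ s ∈ Icc (0:ℝ) t, ‖Φ α₁ s‖ ≤ B₁ := fun s hs =>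
      (hB₁0 s hs).trans (le_max_left _ _)
    have hB₁nn : (0:ℝ) ≤ B₁ := le_max_right _ _
    set R₁ := B₁ + 1 with hR₁def
    set G₁ : EuclideanSpace ℝ (Fin P) → EuclideanSpace ℝ (Fin P) :=
      fun x => -(α₁ ^ ((1:ℝ) - (k:ℝ)) • gradient C (α₁ • x)) with hG₁def
    have hG₁s : ContDiff ℝ (⊤ : ℕ∞) G₁ := by
      apply ContDiff.neg
      apply ContDiff.const_smul
      exact (gradient_contDiff C hCs).comp (contDiff_id.const_smul α₁)
    obtain ⟨L₁, hL₁⟩ := lipOnBall G₁ hG₁s R₁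
    set c₃ := gronwallBound 0 L₁ 1 t with hc₃def
    have hc₃nn : 0 ≤ c₃ := gb_nonneg L₁ 1 one_pos.le ht
    set η : ℝ := (2 * (c₃ + 1))⁻¹ with hηdef
    have hηpos : 0 < η := by positivity
    -- uniform continuity of the vector field in (α, x)
    set h : ℝ × EuclideanSpace ℝ (Fin P) → EuclideanSpace ℝ (Fin P) :=
      fun q => -(q.1 ^ ((1:ℝ) - (k:ℝ)) • gradient C (q.1 • q.2)) with hhdef
    set K : Set (ℝ × EuclideanSpace ℝ (Fin P)) := Icc α₀ 1 ×ˢ closedBall 0 R₁ with hKdef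
    have hKc : IsCompact K := isCompact_Icc.prod (isCompact_closedBall _ _)
    have hhc : ContinuousOn h K := by
      apply ContinuousOn.neg
      refine ContinuousOn.smul (f := fun q : ℝ × EuclideanSpace ℝ (Fin P) => q.1 ^ ((1:ℝ) - (k:ℝ)))
        (g := fun q : ℝ × EuclideanSpace ℝ (Fin P) => gradient C (q.1 • q.2)) ?_ ?_
      · intro q hq
        have hq1 : 0 < q.1 := lt_of_lt_of_le hα₀pos hq.1.1
        exact ((Real.continuousAt_rpow_const q.1 _ (Or.inl hq1.ne')).comp
          continuousAt_fst).continuousWithinAt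
      · exact ((gradient_contDiff C hCs).continuous.comp
          (continuous_fst.smul continuous_snd)).continuousOn
    have hUC := hKc.uniformContinuousOn_of_continuous hhc
    rw [Metric.uniformContinuousOn_iff] at hUC
    obtain ⟨δ, hδpos, hδ⟩ := hUC η hηpos
    refine ⟨Metric.ball α₁ δ, Metric.ball_mem_nhds α₁ hδpos, B₁ + 1, by positivity, ?_⟩
    intro α hαU hαI
    have hαpos : 0 < α := lt_of_lt_of_le hα₀pos hαI.1
    -- perturbation bound
    have hpert : ∀ x : EuclideanSpace ℝ (Fin P), ‖x‖ ≤ R₁ →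
        dist (h (α, x)) (G₁ x) ≤ η := by
      intro x hx
      have hmem1 : (α, x) ∈ K := ⟨hαI, by rwa [Metric.mem_closedBall, dist_zero_right]⟩
      have hmem2 : (α₁, x) ∈ K := ⟨hα₁, by rwa [Metric.mem_closedBall, dist_zero_right]⟩
      have hdq : dist (α, x) ((α₁ : ℝ), x) < δ := by
        rw [Prod.dist_eq]
        simp only [dist_self]
        rw [max_eq_left dist_nonneg]
        exact Metric.mem_ball.1 hαU
      exact (hδ (α, x) hmem1 (α₁, x) hmem2 hdq).le
    have hsmall : gronwallBound 0 L₁ η t < 1 := by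
      rw [gb_eq, ← hc₃def]
      rw [hηdef]
      rw [inv_mul_lt_iff₀ (by positivity)]
      nlinarith
    have htube₁ : {x : EuclideanSpace ℝ (Fin P) | ∃ s ∈ Icc (0:ℝ) t, dist x (Φ α₁ s) ≤ 1}
        ⊆ closedBall 0 R₁ := by
      rintro x ⟨s, hs, hd⟩
      rw [Metric.mem_closedBall, dist_zero_right]
      have h1 : ‖x‖ ≤ ‖x - Φ α₁ s‖ + ‖Φ α₁ s‖ := by
        have := norm_add_le (x - Φ α₁ s) (Φ α₁ s); simpa using this
      rw [dist_eq_norm] at hd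
      have := hB₁ s hs
      rw [hR₁def]
      linarith
    have hboot := bootstrap G₁ (Φ α) (Φ α₁)
      (fun s => -(α ^ ((1:ℝ) - (k:ℝ)) • gradient C (α • Φ α s))) t 1 η L₁
      ht one_pos hηpos.le (hΦ' α hαpos)
      (fun s => hΦ' α₁ hα₁pos s)
      (hL₁.mono htube₁)
      (fun s hs hd => by
        have hxR : ‖Φ α s‖ ≤ R₁ := by
          have := htube₁ ⟨s, hs, hd⟩
          rwa [Metric.mem_closedBall, dist_zero_right] at this
        exact hpert (Φ α s) hxR)
      (by rw [hΦ0 α hαpos, hΦ0 α₁ hα₁pos])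
      hsmall
    have h2 := hboot t ⟨ht, le_refl t⟩
    have h3 : dist (Φ α t) (Φ α₁ t) ≤ 1 := le_of_lt (lt_of_le_of_lt
      (h2.trans (gb_mono L₁ η hηpos.le ht (le_refl t))) hsmall)
    have h4 : ‖Φ α₁ t‖ ≤ B₁ := hB₁ t ⟨ht, le_refl t⟩
    rw [dist_eq_norm] at h3
    have h5 : ‖Φ α t‖ ≤ ‖Φ α t - Φ α₁ t‖ + ‖Φ α₁ t‖ := by
      have := norm_add_le (Φ α t - Φ α₁ t) (Φ α₁ t); simpa using this
    linarith
  clear_value Φ Ψ v B R c₂ α₀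
  choose U hU D hD0 hD using hloc
  obtain ⟨fs, hfs⟩ := (isCompact_Icc (a := α₀) (b := 1)).elim_nhds_subcover' U hU
  obtain ⟨D₀, hD₀⟩ : ∃ D₀ : ℝ, ∀ x ∈ fs, D x.1 x.2 ≤ D₀ := by
    obtain ⟨M0, hM0'⟩ := Finset.exists_le (fs.image (fun x : {a : ℝ // a ∈ Icc α₀ 1} => D x.1 x.2))
    exact ⟨M0, fun x hx => hM0' _ (Finset.mem_image_of_mem _ hx)⟩
  have hglobal : ∀ α ∈ Icc α₀ 1, ‖Φ α t‖ ≤ max D₀ 0 := by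
    intro α hα
    have := hfs hα
    rw [Set.mem_iUnion₂] at this
    obtain ⟨i, hi, hmem⟩ := this
    exact (hD i.1 i.2 α hmem hα).trans ((hD₀ i hi).trans (le_max_left _ _))
  -- assemble the constant
  refine ⟨max (M * R ^ k * c₂) ((max D₀ 0 + B) * (α₀ ^ 2)⁻¹), ?_⟩
  intro α hα hα1
  have hdiff : γC (α ^ ((2 : ℝ) - (k : ℝ)) * t) (α • θ₀) -
      γH (α ^ ((2 : ℝ) - (k : ℝ)) * t) (α • θ₀) = α • (Φ α t - v t) := by
    have h1 := hsmulΦ α hα t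
    have h2 := hsmulΨ α hα t
    have h3 := hΨv α hα t ⟨ht, le_refl t⟩
    rw [smul_sub, h1, ← h3, h2]
  rw [hdiff, norm_smul, Real.norm_eq_abs, abs_of_pos hα]
  rcases le_or_gt α α₀ with hle | hgt
  · have := hsmallα α hα hα1 hle
    rw [dist_eq_norm] at this
    calc α * ‖Φ α t - v t‖ ≤ α * (M * R ^ k * c₂ * α) := by nlinarith
      _ = (M * R ^ k * c₂) * α ^ 2 := by ring
      _ ≤ max (M * R ^ k * c₂) ((max D₀ 0 + B) * (α₀ ^ 2)⁻¹) * α ^ 2 := by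
          have := le_max_left (M * R ^ k * c₂) ((max D₀ 0 + B) * (α₀ ^ 2)⁻¹)
          nlinarith
  · have hαI : α ∈ Icc α₀ 1 := ⟨hgt.le, hα1⟩
    have h1 : ‖Φ α t - v t‖ ≤ max D₀ 0 + B := by
      have h2 := hglobal α hαI
      have h3 : ‖v t‖ ≤ B := hB t ⟨ht, le_refl t⟩
      have := norm_sub_le (Φ α t) (v t)
      linarith
    have hsq : α₀ ^ 2 ≤ α ^ 2 := by nlinarith
    have hDBnn : (0:ℝ) ≤ max D₀ 0 + B := by positivity
    calc α * ‖Φ α t - v t‖ ≤ 1 * (max D₀ 0 + B) := by nlinarith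
      _ = (max D₀ 0 + B) * (α₀ ^ 2)⁻¹ * α₀ ^ 2 := by
          field_simp
      _ ≤ (max D₀ 0 + B) * (α₀ ^ 2)⁻¹ * α ^ 2 := by
          have : (0:ℝ) ≤ (max D₀ 0 + B) * (α₀ ^ 2)⁻¹ := by positivity
          nlinarith
      _ ≤ max (M * R ^ k * c₂) ((max D₀ 0 + B) * (α₀ ^ 2)⁻¹) * α ^ 2 := by
          have := le_max_right (M * R ^ k * c₂) ((max D₀ 0 + B) * (α₀ ^ 2)⁻¹)
          nlinarith
end
end

section
/- Let β > 0 and define, for paths x, y : ℝ → ℝ^P, the weighted inner product ⟨x,y⟩_β = ∫_{−∞}^{∞} e^{−2βt} x(t)ᵀ y(t) dt and norm ‖x‖_β² = ⟨x,x⟩_β. Let x, y be differentiable paths such that ‖x‖_β, ‖y‖_β, ‖ẋ‖_β, ‖ẏ‖_β are all finite and e^{−2βt} ‖x(t)‖ ‖y(t)‖ → 0 as t → ±∞ (and likewise e^{−2βt}‖x(t)‖² → 0). Then: (1) ⟨x, ẏ⟩_β = 2β ⟨x, y⟩_β − ⟨ẋ, y⟩_β; (2) ⟨x, ẋ⟩_β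 = β ‖x‖_β²; (3) ‖x‖_β ≤ (1/β) ‖ẋ‖_β. -/
/-!
Differentiating `t ↦ e^{-2βt} ⟪x t, y t⟫` gives `-2β e^{-2βt} ⟪x, y⟫ + e^{-2βt} (⟪x, ẏ⟫ + ⟪ẋ, y⟫)`;
this derivative is integrable by Cauchy–Schwarz and AM–GM, and the function vanishes at `±∞`,
so its integral over `ℝ` is zero, which is (1). Taking `y = x` gives (2). For (3), AM–GM with
parameter `β` bounds `β ‖x‖_β² = ⟪x, ẋ⟫_β` by `β/2 ‖x‖_β² + 1/(2β) ‖ẋ‖_β²`, i.e.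
`β² ‖x‖_β² ≤ ‖ẋ‖_β²`.
-/

open MeasureTheory Filter Topology
open scoped RealInnerProductSpace

variable {E : Type*} [NormedAddCommGroup E] [InnerProductSpace ℝ E]

lemma real_inner_le_mul_norm_sq_add_norm_sq {c : ℝ} (hc : 0 < c) (a b : E) :
    ⟪a, b⟫ ≤ c / 2 * ‖a‖ ^ 2 + 1 / (2 * c) * ‖b‖ ^ 2 := by
  have hamgm : 2 * c * (‖a‖ * ‖b‖) ≤ c ^ 2 * ‖a‖ ^ 2 + ‖b‖ ^ 2 := by
    nlinarith [sq_nonneg (c * ‖a‖ - ‖b‖)]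
  calc ⟪a, b⟫ ≤ ‖a‖ * ‖b‖ := real_inner_le_norm a b
    _ ≤ (c ^ 2 * ‖a‖ ^ 2 + ‖b‖ ^ 2) / (2 * c) := by rw [le_div_iff₀ (by positivity)]; linarith
    _ = c / 2 * ‖a‖ ^ 2 + 1 / (2 * c) * ‖b‖ ^ 2 := by field_simp

lemma Integrable.mul_inner_of_mul_norm_sq {α : Type*} [MeasurableSpace α] {μ : Measure α}
    {w : α → ℝ} {f g : α → E} (hw : AEStronglyMeasurable w μ) (hw₀ : ∀ a, 0 ≤ w a)
    (hf : AEStronglyMeasurable f μ) (hg : AEStronglyMeasurable g μ)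
    (hfI : Integrable (fun a => w a * ‖f a‖ ^ 2) μ)
    (hgI : Integrable (fun a => w a * ‖g a‖ ^ 2) μ) :
    Integrable (fun a => w a * ⟪f a, g a⟫) μ := by
  refine ((hfI.add hgI).div_const 2).mono (hw.mul (hf.inner hg)) (ae_of_all _ fun a => ?_)
  have hamgm : ‖f a‖ * ‖g a‖ ≤ (‖f a‖ ^ 2 + ‖g a‖ ^ 2) / 2 := by
    nlinarith [sq_nonneg (‖f a‖ - ‖g a‖)]
  calc ‖w a * ⟪f a, g a⟫‖ = w a * |⟪f a, g a⟫| := by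
        rw [Real.norm_eq_abs, abs_mul, abs_of_nonneg (hw₀ a)]
    _ ≤ w a * ((‖f a‖ ^ 2 + ‖g a‖ ^ 2) / 2) :=
        mul_le_mul_of_nonneg_left ((abs_real_inner_le_norm _ _).trans hamgm) (hw₀ a)
    _ = ‖(w a * ‖f a‖ ^ 2 + w a * ‖g a‖ ^ 2) / 2‖ := by
        rw [Real.norm_of_nonneg (by have := hw₀ a; positivity)]; ring

lemma aestronglyMeasurable_of_hasDerivAt {F : Type*} [NormedAddCommGroup F] [NormedSpace ℝ F]
    [CompleteSpace F]
    {f f' : ℝ → F} (hf : ∀ t, HasDerivAt f (f' t) t) (μ : Measure ℝ) :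
    AEStronglyMeasurable f' μ := by
  rw [show f' = deriv f from funext fun t => (hf t).deriv.symm]
  exact aestronglyMeasurable_deriv f μ

/-- The paper's `⟨x, y⟩_β`. -/
noncomputable def weightedInner (β : ℝ) (x y : ℝ → E) : ℝ :=
  ∫ t, Real.exp (-2 * β * t) * ⟪x t, y t⟫

namespace weightedInner

variable {β : ℝ} {x y x' y' : ℝ → E}

lemma self_eq (β : ℝ) (x : ℝ → E) :
    weightedInner β x x = ∫ t, Real.exp (-2 * β * t) * ‖x t‖ ^ 2 := by
  simp only [weightedInner, real_inner_self_eq_norm_sq]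

lemma integrable_integrand (hx : AEStronglyMeasurable x volume)
    (hy : AEStronglyMeasurable y volume)
    (hxI : Integrable fun t => Real.exp (-2 * β * t) * ‖x t‖ ^ 2)
    (hyI : Integrable fun t => Real.exp (-2 * β * t) * ‖y t‖ ^ 2) :
    Integrable fun t => Real.exp (-2 * β * t) * ⟪x t, y t⟫ :=
  Integrable.mul_inner_of_mul_norm_sq (by fun_prop) (fun _ => (Real.exp_pos _).le) hx hy hxI hyI

lemma hasDerivAt_integrand {t : ℝ} {a b : E} (hx : HasDerivAt x a t) (hy : HasDerivAt y b t) :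
    HasDerivAt (fun s => Real.exp (-2 * β * s) * ⟪x s, y s⟫)
      (-2 * β * (Real.exp (-2 * β * t) * ⟪x t, y t⟫) +
        (Real.exp (-2 * β * t) * ⟪x t, b⟫ + Real.exp (-2 * β * t) * ⟪a, y t⟫)) t := by
  have hexp : HasDerivAt (fun s => Real.exp (-2 * β * s)) (Real.exp (-2 * β * t) * (-2 * β)) t :=
    ((hasDerivAt_id' t).const_mul (-2 * β)).exp.congr_deriv (by ring)
  exact (hexp.mul (hx.inner ℝ hy)).congr_deriv (by ring)

lemma tendsto_integrand_zero {l : Filter ℝ}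
    (h : Tendsto (fun t => Real.exp (-2 * β * t) * (‖x t‖ * ‖y t‖)) l (𝓝 0)) :
    Tendsto (fun t => Real.exp (-2 * β * t) * ⟪x t, y t⟫) l (𝓝 0) := by
  refine squeeze_zero_norm (fun t => ?_) h
  rw [Real.norm_eq_abs, abs_mul, abs_of_pos (Real.exp_pos _)]
  exact mul_le_mul_of_nonneg_left (abs_real_inner_le_norm _ _) (Real.exp_pos _).le

theorem deriv_right [CompleteSpace E] (hx : ∀ t, HasDerivAt x (x' t) t) (hy : ∀ t, HasDerivAt y (y' t) t)
    (hxI : Integrable fun t => Real.exp (-2 * β * t) * ‖x t‖ ^ 2)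
    (hyI : Integrable fun t => Real.exp (-2 * β * t) * ‖y t‖ ^ 2)
    (hx'I : Integrable fun t => Real.exp (-2 * β * t) * ‖x' t‖ ^ 2)
    (hy'I : Integrable fun t => Real.exp (-2 * β * t) * ‖y' t‖ ^ 2)
    (hTop : Tendsto (fun t => Real.exp (-2 * β * t) * (‖x t‖ * ‖y t‖)) atTop (𝓝 0))
    (hBot : Tendsto (fun t => Real.exp (-2 * β * t) * (‖x t‖ * ‖y t‖)) atBot (𝓝 0)) :
    weightedInner β x y' = 2 * β * weightedInner β x y - weightedInner β x' y := by
  have hxm : AEStronglyMeasurable x volume :=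
    (Differentiable.continuous fun t => (hx t).differentiableAt).aestronglyMeasurable
  have hym : AEStronglyMeasurable y volume :=
    (Differentiable.continuous fun t => (hy t).differentiableAt).aestronglyMeasurable
  have Ixy := integrable_integrand hxm hym hxI hyI
  have Ixy' := integrable_integrand hxm (aestronglyMeasurable_of_hasDerivAt hy _) hxI hy'I
  have Ix'y := integrable_integrand (aestronglyMeasurable_of_hasDerivAt hx _) hym hx'I hyI
  have Isum : Integrable fun t => Real.exp (-2 * β * t) * ⟪x t, y' t⟫ +
      Real.exp (-2 * β * t) * ⟪x' t, y t⟫ := Ixy'.add Ix'y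
  have hzero := integral_of_hasDerivAt_of_tendsto
    (fun t => hasDerivAt_integrand (hx t) (hy t)) ((Ixy.const_mul (-2 * β)).add Isum)
    (tendsto_integrand_zero hBot) (tendsto_integrand_zero hTop)
  rw [integral_add (Ixy.const_mul _) Isum, integral_add Ixy' Ix'y,
    integral_const_mul] at hzero
  simp only [weightedInner]
  linarith

theorem deriv_self [CompleteSpace E] (hx : ∀ t, HasDerivAt x (x' t) t)
    (hxI : Integrable fun t => Real.exp (-2 * β * t) * ‖x t‖ ^ 2)
    (hx'I : Integrable fun t => Real.exp (-2 * β * t) * ‖x' t‖ ^ 2)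
    (hTop : Tendsto (fun t => Real.exp (-2 * β * t) * ‖x t‖ ^ 2) atTop (𝓝 0))
    (hBot : Tendsto (fun t => Real.exp (-2 * β * t) * ‖x t‖ ^ 2) atBot (𝓝 0)) :
    weightedInner β x x' = β * weightedInner β x x := by
  have h := deriv_right hx hx hxI hxI hx'I hx'I (by simpa only [sq] using hTop)
    (by simpa only [sq] using hBot)
  have hcomm : weightedInner β x' x = weightedInner β x x' := by
    simp only [weightedInner, real_inner_comm]
  linarith

lemma le_mul_self_add_mul_self {c : ℝ} (hc : 0 < c) (hx : AEStronglyMeasurable x volume)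
    (hy : AEStronglyMeasurable y volume)
    (hxI : Integrable fun t => Real.exp (-2 * β * t) * ‖x t‖ ^ 2)
    (hyI : Integrable fun t => Real.exp (-2 * β * t) * ‖y t‖ ^ 2) :
    weightedInner β x y ≤ c / 2 * weightedInner β x x + 1 / (2 * c) * weightedInner β y y := by
  rw [self_eq, self_eq, ← integral_const_mul, ← integral_const_mul,
    ← integral_add (hxI.const_mul _) (hyI.const_mul _)]
  refine integral_mono (integrable_integrand hx hy hxI hyI)
    ((hxI.const_mul _).add (hyI.const_mul _)) fun t => ?_
  have h := mul_le_mul_of_nonneg_left (real_inner_le_mul_norm_sq_add_norm_sq hc (x t) (y t))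
    (Real.exp_pos (-2 * β * t)).le
  linarith

theorem sqrt_self_le [CompleteSpace E] (hβ : 0 < β) (hx : ∀ t, HasDerivAt x (x' t) t)
    (hxI : Integrable fun t => Real.exp (-2 * β * t) * ‖x t‖ ^ 2)
    (hx'I : Integrable fun t => Real.exp (-2 * β * t) * ‖x' t‖ ^ 2)
    (hTop : Tendsto (fun t => Real.exp (-2 * β * t) * ‖x t‖ ^ 2) atTop (𝓝 0))
    (hBot : Tendsto (fun t => Real.exp (-2 * β * t) * ‖x t‖ ^ 2) atBot (𝓝 0)) :
    √(weightedInner β x x) ≤ 1 / β * √(weightedInner β x' x') := by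
  have hle := le_mul_self_add_mul_self hβ
    (Differentiable.continuous fun t => (hx t).differentiableAt).aestronglyMeasurable
    (aestronglyMeasurable_of_hasDerivAt hx _) hxI hx'I
  rw [deriv_self hx hxI hx'I hTop hBot] at hle
  have hsq : β ^ 2 * weightedInner β x x ≤ weightedInner β x' x' := by
    have := mul_le_mul_of_nonneg_left hle (by positivity : (0 : ℝ) ≤ 2 * β)
    field_simp at this
    linarith
  rw [one_div_mul_eq_div, le_div_iff₀ hβ]
  calc √(weightedInner β x x) * β = √(β ^ 2 * weightedInner β x x) := by
        rw [Real.sqrt_mul (sq_nonneg β), Real.sqrt_sq hβ.le, mul_comm]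
    _ ≤ √(weightedInner β x' x') := Real.sqrt_le_sqrt hsq

end weightedInner

/-- **Properties of the exponentially weighted inner product `⟨x,y⟩_β`.**
For differentiable paths `x, y : ℝ → ℝ^P` with finite weighted norms
(`⟨x,x⟩_β, ⟨y,y⟩_β, ⟨ẋ,ẋ⟩_β, ⟨ẏ,ẏ⟩_β < ∞`) and vanishing weighted products at `±∞`:
(1) `⟨x, ẏ⟩_β = 2β ⟨x, y⟩_β - ⟨ẋ, y⟩_β`;  (2) `⟨x, ẋ⟩_β = β ‖x‖_β²`;
(3) `‖x‖_β ≤ (1/β) ‖ẋ‖_β`. -/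
theorem weighted_norm_identities_exponential
    (P : ℕ) (β : ℝ) (hβ : 0 < β)
    (x y x' y' : ℝ → EuclideanSpace ℝ (Fin P))
    (hx : ∀ t, HasDerivAt x (x' t) t) (hy : ∀ t, HasDerivAt y (y' t) t)
    (hxI : Integrable fun t : ℝ => Real.exp (-2 * β * t) * ‖x t‖ ^ 2)
    (hyI : Integrable fun t : ℝ => Real.exp (-2 * β * t) * ‖y t‖ ^ 2)
    (hx'I : Integrable fun t : ℝ => Real.exp (-2 * β * t) * ‖x' t‖ ^ 2)
    (hy'I : Integrable fun t : ℝ => Real.exp (-2 * β * t) * ‖y' t‖ ^ 2)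
    (hxyTop : Tendsto (fun t : ℝ => Real.exp (-2 * β * t) * (‖x t‖ * ‖y t‖)) atTop (nhds 0))
    (hxyBot : Tendsto (fun t : ℝ => Real.exp (-2 * β * t) * (‖x t‖ * ‖y t‖)) atBot (nhds 0))
    (hxxTop : Tendsto (fun t : ℝ => Real.exp (-2 * β * t) * ‖x t‖ ^ 2) atTop (nhds 0))
    (hxxBot : Tendsto (fun t : ℝ => Real.exp (-2 * β * t) * ‖x t‖ ^ 2) atBot (nhds 0)) :
    (∫ t : ℝ, Real.exp (-2 * β * t) * (inner ℝ (x t) (y' t) : ℝ)) =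
        2 * β * (∫ t : ℝ, Real.exp (-2 * β * t) * (inner ℝ (x t) (y t) : ℝ)) -
          (∫ t : ℝ, Real.exp (-2 * β * t) * (inner ℝ (x' t) (y t) : ℝ)) ∧
    (∫ t : ℝ, Real.exp (-2 * β * t) * (inner ℝ (x t) (x' t) : ℝ)) =
        β * (∫ t : ℝ, Real.exp (-2 * β * t) * ‖x t‖ ^ 2) ∧
    Real.sqrt (∫ t : ℝ, Real.exp (-2 * β * t) * ‖x t‖ ^ 2) ≤
        (1 / β) * Real.sqrt (∫ t : ℝ, Real.exp (-2 * β * t) * ‖x' t‖ ^ 2) := by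
  refine ⟨weightedInner.deriv_right hx hy hxI hyI hx'I hy'I hxyTop hxyBot, ?_, ?_⟩
  · rw [← weightedInner.self_eq]
    exact weightedInner.deriv_self hx hxI hx'I hxxTop hxxBot
  · rw [← weightedInner.self_eq, ← weightedInner.self_eq]
    exact weightedInner.sqrt_self_le hβ hx hxI hx'I hxxTop hxxBot
end

section
/- Let α > 0 and define, for paths x, y : (−∞,0) → ℝ^P, the weighted inner product ⟨x,y⟩_w = ∫_{−∞}^{0} (−t)^{2α−1} x(t)ᵀ y(t) dt and norm ‖x‖_w² = ⟨x,x⟩_w. Let x, y be differentiable paths such that ‖x‖_w, ‖y‖_w, ‖t ↦ −t ẋ(t)‖_w, ‖t ↦ −t ẏ(t)‖_w are all finite and (−t)^{2α} ‖x(t)‖ ‖y(t)‖ → 0 both as t → −∞ and as t → 0⁻ (and likewise for (−t)^{2α}‖x(t)‖²). Then: (1) ⟨x, t ↦ −t ẏ(t)⟩_w = 2α ⟨x, y⟩_w − ⟨t ↦ −t ẋ(t), y⟩_w; (2) ⟨x, t ↦ −t ẋ(t)⟩_w = α ‖x‖_w²; (3) ‖x‖_w ≤ (1/α) ‖t ↦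 −t ẋ(t)‖_w. -/
/-!
Differentiating the boundary term gives
`d/dt [(-t)^(2α) ⟪x, y⟫] = (-t)^(2α-1) (⟪x, -t ẏ⟫ + ⟪-t ẋ, y⟫) - 2α (-t)^(2α-1) ⟪x, y⟫`.
Pointwise Cauchy–Schwarz makes the right side integrable on `(-∞, 0)`, and the boundary term
vanishes at both ends, so its integral is zero: this is (1), and (2) is (1) with `y = x`.
For (3), integrate the weighted AM-GM inequality `2α ⟪x, -t ẋ⟫ ≤ α² ‖x‖² + ‖-t ẋ‖²` and insert
(2) on the left, which gives `α² ‖x‖_w² ≤ ‖-t ẋ‖_w²`.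
-/

open MeasureTheory Filter Set Topology

theorem integral_Iio_of_hasDerivAt_of_tendsto {E : Type*} [NormedAddCommGroup E]
    [NormedSpace ℝ E] [CompleteSpace E] {f f' : ℝ → E} {a : ℝ} {m n : E}
    (hderiv : ∀ t < a, HasDerivAt f (f' t) t) (f'int : IntegrableOn f' (Iio a))
    (hbot : Tendsto f atBot (𝓝 m)) (ha : Tendsto f (𝓝[<] a) (𝓝 n)) :
    ∫ t in Iio a, f' t = n - m := by
  -- Redefining `f` at `a` makes it left-continuous there without changing anything else.
  set g := Function.update f a n
  have hg_a : g a = n := Function.update_self a n f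
  have hg_eq : ∀ t ≠ a, g t = f t := fun t ht => Function.update_of_ne ht n f
  have hg_cont : ContinuousWithinAt g (Iic a) a := by
    refine continuousWithinAt_Iio_iff_Iic.1 ?_
    rw [ContinuousWithinAt, hg_a]
    refine ha.congr' ?_
    filter_upwards [self_mem_nhdsWithin] with t ht using (hg_eq t ht.ne).symm
  have hg_deriv : ∀ t ∈ Iio a, HasDerivAt g (f' t) t := fun t ht =>
    (hderiv t ht).congr_of_eventuallyEq <| by
      filter_upwards [Iio_mem_nhds ht] with s hs using hg_eq s hs.ne
  have hg_bot : Tendsto g atBot (𝓝 m) := hbot.congr' <| by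
    filter_upwards [eventually_lt_atBot a] with t ht using (hg_eq t ht.ne).symm
  rw [← integral_Iic_eq_integral_Iio,
    integral_Iic_of_hasDerivAt_of_tendsto hg_cont hg_deriv
      (Iff.mpr integrableOn_Iic_iff_integrableOn_Iio f'int) hg_bot, hg_a]

theorem aestronglyMeasurable_restrict_of_hasDerivAt {E : Type*} [NormedAddCommGroup E]
    [NormedSpace ℝ E] [CompleteSpace E] {f f' : ℝ → E} {s : Set ℝ} (hs : MeasurableSet s)
    (hf : ∀ t ∈ s, HasDerivAt f (f' t) t) :
    AEStronglyMeasurable f (volume.restrict s) ∧ AEStronglyMeasurable f' (volume.restrict s) :=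
  ⟨ContinuousOn.aestronglyMeasurable
      (fun t ht => (hf t ht).continuousAt.continuousWithinAt) hs,
    (aestronglyMeasurable_deriv f _).congr <|
      (ae_restrict_mem hs).mono fun t ht => (hf t ht).deriv⟩

section InnerProduct

variable {E : Type*} [NormedAddCommGroup E] [InnerProductSpace ℝ E]

theorem Integrable.mul_inner_of_mul_norm_sq_s16 {X : Type*} [MeasurableSpace X] {μ : Measure X}
    {w : X → ℝ} {u v : X → E} (hw : ∀ᵐ t ∂μ, 0 ≤ w t) (hwm : AEStronglyMeasurable w μ)
    (hum : AEStronglyMeasurable u μ) (hvm : AEStronglyMeasurable v μ)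
    (hu : Integrable (fun t => w t * ‖u t‖ ^ 2) μ)
    (hv : Integrable (fun t => w t * ‖v t‖ ^ 2) μ) :
    Integrable (fun t => w t * inner ℝ (u t) (v t)) μ := by
  refine ((hu.add hv).const_mul (1 / 2)).mono' (hwm.mul (hum.inner hvm)) ?_
  filter_upwards [hw] with t hwt
  have hamgm : |inner ℝ (u t) (v t)| ≤ 1 / 2 * (‖u t‖ ^ 2 + ‖v t‖ ^ 2) := by
    nlinarith [abs_real_inner_le_norm (u t) (v t), sq_nonneg (‖u t‖ - ‖v t‖)]
  rw [Pi.add_apply, Real.norm_eq_abs, abs_mul, abs_of_nonneg hwt]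
  nlinarith [mul_le_mul_of_nonneg_left hamgm hwt]

theorem tendsto_mul_inner_of_tendsto_mul_norm_mul_norm {X : Type*} {l : Filter X}
    {w : X → ℝ} {u v : X → E} (hw : ∀ᶠ t in l, 0 ≤ w t)
    (h : Tendsto (fun t => w t * (‖u t‖ * ‖v t‖)) l (𝓝 0)) :
    Tendsto (fun t => w t * inner ℝ (u t) (v t)) l (𝓝 0) := by
  refine squeeze_zero_norm' ?_ h
  filter_upwards [hw] with t hwt
  rw [Real.norm_eq_abs, abs_mul, abs_of_nonneg hwt]
  exact mul_le_mul_of_nonneg_left (abs_real_inner_le_norm _ _) hwt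

theorem hasDerivAt_neg_rpow_mul_inner {r t : ℝ} {x y : ℝ → E} {x' y' : E} (ht : t < 0)
    (hx : HasDerivAt x x' t) (hy : HasDerivAt y y' t) :
    HasDerivAt (fun s => (-s) ^ r * inner ℝ (x s) (y s))
      ((-t) ^ (r - 1) * ((-t) * inner ℝ (x t) y') + (-t) ^ (r - 1) * ((-t) * inner ℝ x' (y t))
        - r * ((-t) ^ (r - 1) * inner ℝ (x t) (y t))) t := by
  have hw : HasDerivAt (fun s : ℝ => (-s) ^ r) (r * (-t) ^ (r - 1) * -1) t :=
    (Real.hasDerivAt_rpow_const (Or.inl (neg_pos.2 ht).ne')).comp t (hasDerivAt_neg t)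
  have hpow : (-t) ^ r = (-t) ^ (r - 1) * (-t) := by
    rw [← Real.rpow_add_one (neg_pos.2 ht).ne', sub_add_cancel]
  refine (hw.mul (hx.inner ℝ hy)).congr_deriv ?_
  rw [hpow]
  ring

theorem integrableOn_neg_rpow_mul_inner {r : ℝ} {u v : ℝ → E}
    (hum : AEStronglyMeasurable u (volume.restrict (Iio 0)))
    (hvm : AEStronglyMeasurable v (volume.restrict (Iio 0)))
    (hu : IntegrableOn (fun t : ℝ => (-t) ^ r * ‖u t‖ ^ 2) (Iio 0))
    (hv : IntegrableOn (fun t : ℝ => (-t) ^ r * ‖v t‖ ^ 2) (Iio 0)) :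
    IntegrableOn (fun t : ℝ => (-t) ^ r * inner ℝ (u t) (v t)) (Iio 0) :=
  Integrable.mul_inner_of_mul_norm_sq_s16
    ((ae_restrict_mem measurableSet_Iio).mono fun _ ht => Real.rpow_nonneg (neg_nonneg.2 ht.le) _)
    (measurable_neg.pow_const r).aestronglyMeasurable hum hvm hu hv

theorem integrableOn_neg_rpow_mul_neg_mul_inner {r : ℝ} {u v : ℝ → E}
    (hum : AEStronglyMeasurable u (volume.restrict (Iio 0)))
    (hvm : AEStronglyMeasurable v (volume.restrict (Iio 0)))
    (hu : IntegrableOn (fun t : ℝ => (-t) ^ r * ‖u t‖ ^ 2) (Iio 0))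
    (hv : IntegrableOn (fun t : ℝ => (-t) ^ r * ((-t) * ‖v t‖) ^ 2) (Iio 0)) :
    IntegrableOn (fun t : ℝ => (-t) ^ r * ((-t) * inner ℝ (u t) (v t))) (Iio 0) := by
  have hnorm : ∀ t : ℝ, ((-t) * ‖v t‖) ^ 2 = ‖(-t) • v t‖ ^ 2 := fun t => by
    rw [norm_smul, Real.norm_eq_abs, mul_pow, mul_pow, sq_abs]
  have hinner : ∀ t : ℝ, (-t) * inner ℝ (u t) (v t) = inner ℝ (u t) ((-t) • v t) := fun t =>
    (real_inner_smul_right _ _ _).symm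
  simp only [hinner]
  simp only [hnorm] at hv
  exact integrableOn_neg_rpow_mul_inner hum
    (measurable_neg.aestronglyMeasurable.smul hvm) hu hv

end InnerProduct

section Identities

variable {E : Type*} [NormedAddCommGroup E] [InnerProductSpace ℝ E] [CompleteSpace E]
  {α : ℝ} {x y x' y' : ℝ → E}

theorem integral_Iio_neg_rpow_mul_inner_deriv_right
    (hx : ∀ t < (0 : ℝ), HasDerivAt x (x' t) t) (hy : ∀ t < (0 : ℝ), HasDerivAt y (y' t) t)
    (hxI : IntegrableOn (fun t : ℝ => (-t) ^ (2 * α - 1) * ‖x t‖ ^ 2) (Iio 0))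
    (hyI : IntegrableOn (fun t : ℝ => (-t) ^ (2 * α - 1) * ‖y t‖ ^ 2) (Iio 0))
    (hx'I : IntegrableOn (fun t : ℝ => (-t) ^ (2 * α - 1) * ((-t) * ‖x' t‖) ^ 2) (Iio 0))
    (hy'I : IntegrableOn (fun t : ℝ => (-t) ^ (2 * α - 1) * ((-t) * ‖y' t‖) ^ 2) (Iio 0))
    (hxyBot : Tendsto (fun t : ℝ => (-t) ^ (2 * α) * (‖x t‖ * ‖y t‖)) atBot (𝓝 0))
    (hxyZero : Tendsto (fun t : ℝ => (-t) ^ (2 * α) * (‖x t‖ * ‖y t‖)) (𝓝[<] 0) (𝓝 0)) :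
    ∫ t in Iio (0 : ℝ), (-t) ^ (2 * α - 1) * ((-t) * inner ℝ (x t) (y' t)) =
      2 * α * (∫ t in Iio (0 : ℝ), (-t) ^ (2 * α - 1) * inner ℝ (x t) (y t)) -
        ∫ t in Iio (0 : ℝ), (-t) ^ (2 * α - 1) * ((-t) * inner ℝ (x' t) (y t)) := by
  obtain ⟨hxm, hx'm⟩ := aestronglyMeasurable_restrict_of_hasDerivAt measurableSet_Iio hx
  obtain ⟨hym, hy'm⟩ := aestronglyMeasurable_restrict_of_hasDerivAt measurableSet_Iio hy
  have hxy'I := integrableOn_neg_rpow_mul_neg_mul_inner hxm hy'm hxI hy'I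
  have hx'yI : IntegrableOn
      (fun t : ℝ => (-t) ^ (2 * α - 1) * ((-t) * inner ℝ (x' t) (y t))) (Iio 0) := by
    simpa only [real_inner_comm] using integrableOn_neg_rpow_mul_neg_mul_inner hym hx'm hyI hx'I
  have hxyI := integrableOn_neg_rpow_mul_inner hxm hym hxI hyI
  have hnonneg : ∀ t : ℝ, t < 0 → 0 ≤ (-t) ^ (2 * α) := fun t ht =>
    Real.rpow_nonneg (neg_nonneg.2 ht.le) _
  have hFTC := integral_Iio_of_hasDerivAt_of_tendsto
    (fun t ht => hasDerivAt_neg_rpow_mul_inner ht (hx t ht) (hy t ht))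
    ((hxy'I.fun_add hx'yI).sub (hxyI.const_mul (2 * α)))
    (tendsto_mul_inner_of_tendsto_mul_norm_mul_norm
      ((eventually_lt_atBot 0).mono hnonneg) hxyBot)
    (tendsto_mul_inner_of_tendsto_mul_norm_mul_norm
      (eventually_mem_nhdsWithin.mono hnonneg) hxyZero)
  rw [integral_sub (hxy'I.fun_add hx'yI) (hxyI.const_mul _), integral_add hxy'I hx'yI,
    integral_const_mul, sub_zero] at hFTC
  linarith

theorem integral_Iio_neg_rpow_mul_inner_deriv_self
    (hx : ∀ t < (0 : ℝ), HasDerivAt x (x' t) t)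
    (hxI : IntegrableOn (fun t : ℝ => (-t) ^ (2 * α - 1) * ‖x t‖ ^ 2) (Iio 0))
    (hx'I : IntegrableOn (fun t : ℝ => (-t) ^ (2 * α - 1) * ((-t) * ‖x' t‖) ^ 2) (Iio 0))
    (hxxBot : Tendsto (fun t : ℝ => (-t) ^ (2 * α) * ‖x t‖ ^ 2) atBot (𝓝 0))
    (hxxZero : Tendsto (fun t : ℝ => (-t) ^ (2 * α) * ‖x t‖ ^ 2) (𝓝[<] 0) (𝓝 0)) :
    ∫ t in Iio (0 : ℝ), (-t) ^ (2 * α - 1) * ((-t) * inner ℝ (x t) (x' t)) =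
      α * ∫ t in Iio (0 : ℝ), (-t) ^ (2 * α - 1) * ‖x t‖ ^ 2 := by
  have h := integral_Iio_neg_rpow_mul_inner_deriv_right hx hx hxI hxI hx'I hx'I
    (by simpa only [sq] using hxxBot) (by simpa only [sq] using hxxZero)
  have hcomm : ∀ t, inner ℝ (x' t) (x t) = inner ℝ (x t) (x' t) := fun t => real_inner_comm _ _
  simp only [hcomm, real_inner_self_eq_norm_sq] at h
  linarith

theorem sq_mul_integral_Iio_neg_rpow_mul_norm_sq_le (hα : 0 ≤ α)
    (hx : ∀ t < (0 : ℝ), HasDerivAt x (x' t) t)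
    (hxI : IntegrableOn (fun t : ℝ => (-t) ^ (2 * α - 1) * ‖x t‖ ^ 2) (Iio 0))
    (hx'I : IntegrableOn (fun t : ℝ => (-t) ^ (2 * α - 1) * ((-t) * ‖x' t‖) ^ 2) (Iio 0))
    (hxx' : ∫ t in Iio (0 : ℝ), (-t) ^ (2 * α - 1) * ((-t) * inner ℝ (x t) (x' t)) =
      α * ∫ t in Iio (0 : ℝ), (-t) ^ (2 * α - 1) * ‖x t‖ ^ 2) :
    α ^ 2 * ∫ t in Iio (0 : ℝ), (-t) ^ (2 * α - 1) * ‖x t‖ ^ 2 ≤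
      ∫ t in Iio (0 : ℝ), (-t) ^ (2 * α - 1) * ((-t) * ‖x' t‖) ^ 2 := by
  obtain ⟨hxm, hx'm⟩ := aestronglyMeasurable_restrict_of_hasDerivAt measurableSet_Iio hx
  have hxx'I := integrableOn_neg_rpow_mul_neg_mul_inner hxm hx'm hxI hx'I
  have hpointwise : ∀ t ∈ Iio (0 : ℝ),
      2 * α * ((-t) ^ (2 * α - 1) * ((-t) * inner ℝ (x t) (x' t))) ≤
        α ^ 2 * ((-t) ^ (2 * α - 1) * ‖x t‖ ^ 2) + (-t) ^ (2 * α - 1) * ((-t) * ‖x' t‖) ^ 2 := by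
    intro t ht
    have hneg : 0 ≤ -t := neg_nonneg.2 ht.le
    have hcs : (-t) * inner ℝ (x t) (x' t) ≤ ‖x t‖ * ((-t) * ‖x' t‖) := by
      nlinarith [mul_le_mul_of_nonneg_left (real_inner_le_norm (x t) (x' t)) hneg]
    have hamgm : 2 * α * ((-t) * inner ℝ (x t) (x' t)) ≤
        α ^ 2 * ‖x t‖ ^ 2 + ((-t) * ‖x' t‖) ^ 2 := by
      nlinarith [mul_le_mul_of_nonneg_left hcs hα, sq_nonneg (α * ‖x t‖ - (-t) * ‖x' t‖)]
    nlinarith [mul_le_mul_of_nonneg_left hamgm (Real.rpow_nonneg hneg (2 * α - 1))]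
  have hint := setIntegral_mono_on (hxx'I.const_mul (2 * α))
    ((hxI.const_mul (α ^ 2)).fun_add hx'I) measurableSet_Iio hpointwise
  rw [integral_const_mul, integral_add (hxI.const_mul (α ^ 2)) hx'I, integral_const_mul,
    hxx'] at hint
  linarith

end Identities

theorem sqrt_le_one_div_mul_sqrt_of_sq_mul_le {a b c : ℝ} (hc : 0 < c) (h : c ^ 2 * a ≤ b) :
    √a ≤ 1 / c * √b := by
  rw [one_div, ← div_eq_inv_mul, le_div_iff₀ hc]
  calc √a * c = √(c ^ 2 * a) := by rw [Real.sqrt_mul (sq_nonneg c), Real.sqrt_sq hc.le, mul_comm]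
    _ ≤ √b := Real.sqrt_le_sqrt h

/-- **Properties of the polynomially weighted inner product `⟨x,y⟩_w` on `(-∞,0)`.**
For differentiable paths `x, y : (-∞,0) → ℝ^P` with finite weighted norms
(`‖x‖_w, ‖y‖_w, ‖-tẋ‖_w, ‖-tẏ‖_w < ∞`) and vanishing weighted products at `-∞` and
`0⁻`: (1) `⟨x, -tẏ⟩_w = 2α ⟨x, y⟩_w - ⟨-tẋ, y⟩_w`;  (2) `⟨x, -tẋ⟩_w = α ‖x‖_w²`;
(3) `‖x‖_w ≤ (1/α) ‖-tẋ‖_w`. -/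
theorem weighted_norm_identities_polynomial
    (P : ℕ) (α : ℝ) (hα : 0 < α)
    (x y x' y' : ℝ → EuclideanSpace ℝ (Fin P))
    (hx : ∀ t < (0 : ℝ), HasDerivAt x (x' t) t)
    (hy : ∀ t < (0 : ℝ), HasDerivAt y (y' t) t)
    (hxI : IntegrableOn (fun t : ℝ => (-t) ^ (2 * α - 1) * ‖x t‖ ^ 2) (Set.Iio 0))
    (hyI : IntegrableOn (fun t : ℝ => (-t) ^ (2 * α - 1) * ‖y t‖ ^ 2) (Set.Iio 0))
    (hx'I : IntegrableOn (fun t : ℝ => (-t) ^ (2 * α - 1) * ((-t) * ‖x' t‖) ^ 2) (Set.Iio 0))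
    (hy'I : IntegrableOn (fun t : ℝ => (-t) ^ (2 * α - 1) * ((-t) * ‖y' t‖) ^ 2) (Set.Iio 0))
    (hxyBot : Tendsto (fun t : ℝ => (-t) ^ (2 * α) * (‖x t‖ * ‖y t‖)) atBot (nhds 0))
    (hxyZero : Tendsto (fun t : ℝ => (-t) ^ (2 * α) * (‖x t‖ * ‖y t‖))
      (nhdsWithin 0 (Set.Iio 0)) (nhds 0))
    (hxxBot : Tendsto (fun t : ℝ => (-t) ^ (2 * α) * ‖x t‖ ^ 2) atBot (nhds 0))
    (hxxZero : Tendsto (fun t : ℝ => (-t) ^ (2 * α) * ‖x t‖ ^ 2)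
      (nhdsWithin 0 (Set.Iio 0)) (nhds 0)) :
    (∫ t in Set.Iio (0 : ℝ), (-t) ^ (2 * α - 1) * ((-t) * (inner ℝ (x t) (y' t) : ℝ))) =
        2 * α * (∫ t in Set.Iio (0 : ℝ), (-t) ^ (2 * α - 1) * (inner ℝ (x t) (y t) : ℝ)) -
          (∫ t in Set.Iio (0 : ℝ), (-t) ^ (2 * α - 1) * ((-t) * (inner ℝ (x' t) (y t) : ℝ))) ∧
    (∫ t in Set.Iio (0 : ℝ), (-t) ^ (2 * α - 1) * ((-t) * (inner ℝ (x t) (x' t) : ℝ))) =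
        α * (∫ t in Set.Iio (0 : ℝ), (-t) ^ (2 * α - 1) * ‖x t‖ ^ 2) ∧
    Real.sqrt (∫ t in Set.Iio (0 : ℝ), (-t) ^ (2 * α - 1) * ‖x t‖ ^ 2) ≤
        (1 / α) * Real.sqrt
          (∫ t in Set.Iio (0 : ℝ), (-t) ^ (2 * α - 1) * ((-t) * ‖x' t‖) ^ 2) := by
  have hxx' := integral_Iio_neg_rpow_mul_inner_deriv_self hx hxI hx'I hxxBot hxxZero
  exact ⟨integral_Iio_neg_rpow_mul_inner_deriv_right hx hy hxI hyI hx'I hy'I hxyBot hxyZero,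
    hxx', sqrt_le_one_div_mul_sqrt_of_sq_mul_le hα
      (sq_mul_integral_Iio_neg_rpow_mul_norm_sq_le hα.le hx hxI hx'I hxx')⟩
end

section
/- Let k ≥ 2 be an integer and let C : ℝ^P → ℝ be k times continuously differentiable such that all derivatives of C of orders 1 through k−1 vanish at 0 and M := sup_{x ∈ ℝ^P} ‖D^k C(x)‖ < ∞, where ‖D^k C(x)‖ is the operator norm of the k-th derivative of C at x as a k-linear map. Then for all x, y ∈ ℝ^P: (1) ‖∇C(x)‖ ≤ M ‖x‖^{k−1}/(k−1)!; (2) ‖∇C(x) − ∇C(y)‖ ≤ (M/(k−2)!) ‖x − y‖ (max{‖x‖, ‖y‖})^{k−2}. -/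
/-!
Integrate radially from the origin: if `g 0 = 0` and `‖Dg(y)‖ ≤ A ‖y‖^m / m!`, then restricting `g`
to the ray `t ↦ t • x` and comparing with `t ↦ A ‖x‖^(m+1) t^(m+1) / (m+1)!` gives
`‖g x‖ ≤ A ‖x‖^(m+1) / (m+1)!`. Starting from `‖D^k C‖ ≤ M` and descending through the derivatives
`D^(k-1) C, …, D^1 C`, all of which vanish at `0`, gives `‖D^n C(x)‖ ≤ M ‖x‖^(k-n) / (k-n)!`.
The case `n = 1` is the first bound; the case `n = 2`, together with the mean value inequality on
the segment `[y, x]` (where `‖z‖ ≤ max ‖x‖ ‖y‖`), is the second.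
-/

open Set

section Normed

variable {E F : Type*} [NormedAddCommGroup E] [NormedSpace ℝ E]
  [NormedAddCommGroup F] [NormedSpace ℝ F]

theorem norm_le_pow_div_factorial_of_norm_fderiv_le {g : E → F} (hg : Differentiable ℝ g)
    (hg0 : g 0 = 0) {A : ℝ} {m : ℕ} (hb : ∀ y, ‖fderiv ℝ g y‖ ≤ A * ‖y‖ ^ m / m.factorial)
    (x : E) : ‖g x‖ ≤ A * ‖x‖ ^ (m + 1) / (m + 1).factorial := by
  let B : ℝ → ℝ := fun t => A * ‖x‖ ^ (m + 1) / (m + 1).factorial * t ^ (m + 1)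
  let B' : ℝ → ℝ := fun t => A * ‖x‖ ^ (m + 1) / m.factorial * t ^ m
  have hray : ∀ t : ℝ, HasDerivAt (fun t : ℝ => g (t • x)) (fderiv ℝ g (t • x) x) t := fun t =>
    (hg (t • x)).hasFDerivAt.comp_hasDerivAt t (by simpa using (hasDerivAt_id t).smul_const x)
  have hB : ∀ t, HasDerivAt B (B' t) t := fun t => by
    refine ((hasDerivAt_pow (m + 1) t).const_mul _).congr_deriv ?_
    simp only [B', Nat.factorial_succ, Nat.cast_mul, Nat.add_sub_cancel]
    field_simp
  have hbound : ∀ t ∈ Ico (0 : ℝ) 1, ‖fderiv ℝ g (t • x) x‖ ≤ B' t := fun t ht =>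
    calc ‖fderiv ℝ g (t • x) x‖ ≤ ‖fderiv ℝ g (t • x)‖ * ‖x‖ := ContinuousLinearMap.le_opNorm _ x
      _ ≤ A * ‖t • x‖ ^ m / m.factorial * ‖x‖ := by gcongr; exact hb _
      _ = B' t := by
        rw [norm_smul, Real.norm_of_nonneg ht.1]
        ring
  have hB0 : ‖g ((0 : ℝ) • x)‖ ≤ B 0 := by simp [B, hg0]
  simpa [B] using image_norm_le_of_norm_deriv_right_le_deriv_boundary
    (hg.continuous.comp (continuous_id.smul continuous_const)).continuousOn
    (fun t _ => (hray t).hasDerivWithinAt) hB0 hB hbound (right_mem_Icc.2 zero_le_one)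

theorem norm_iteratedFDeriv_le_of_iteratedFDeriv_eq_zero {f : E → F} {M : ℝ} :
    ∀ (j n : ℕ), ContDiff ℝ (n + j : ℕ) f →
      (∀ i, n ≤ i → i < n + j → iteratedFDeriv ℝ i f 0 = 0) →
      (∀ x, ‖iteratedFDeriv ℝ (n + j) f x‖ ≤ M) →
      ∀ x, ‖iteratedFDeriv ℝ n f x‖ ≤ M * ‖x‖ ^ j / j.factorial
  | 0, n, _, _, hM, x => by simpa using hM x
  | j + 1, n, hf, h0, hM, x => by
    rw [show n + (j + 1) = n + 1 + j by omega] at hf hM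
    have hDn : ∀ y, ‖fderiv ℝ (iteratedFDeriv ℝ n f) y‖ ≤ M * ‖y‖ ^ j / j.factorial := fun y => by
      rw [norm_fderiv_iteratedFDeriv]
      exact norm_iteratedFDeriv_le_of_iteratedFDeriv_eq_zero j (n + 1) hf
        (fun i hi hij => h0 i (by omega) (by omega)) hM y
    exact norm_le_pow_div_factorial_of_norm_fderiv_le
      (hf.differentiable_iteratedFDeriv (by exact_mod_cast (by omega : n < n + 1 + j)))
      (h0 n le_rfl (by omega)) hDn x

theorem norm_sub_le_of_norm_fderiv_le_mul_pow {g : E → F} (hg : Differentiable ℝ g) {A : ℝ}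
    (hA : 0 ≤ A) {m : ℕ} (hb : ∀ z, ‖fderiv ℝ g z‖ ≤ A * ‖z‖ ^ m) (x y : E) :
    ‖g x - g y‖ ≤ A * ‖x - y‖ * max ‖x‖ ‖y‖ ^ m := by
  have hseg : ∀ z ∈ segment ℝ y x, ‖fderiv ℝ g z‖ ≤ A * max ‖x‖ ‖y‖ ^ m := fun z hz => by
    have hz : ‖z‖ ≤ max ‖y‖ ‖x‖ := convexOn_univ_norm.le_on_segment (mem_univ y) (mem_univ x) hz
    rw [max_comm] at hz
    exact (hb z).trans (by gcongr)
  calc ‖g x - g y‖ ≤ A * max ‖x‖ ‖y‖ ^ m * ‖x - y‖ :=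
        (convex_segment y x).norm_image_sub_le_of_norm_fderiv_le (fun z _ => hg z) hseg
          (left_mem_segment ℝ y x) (right_mem_segment ℝ y x)
    _ = A * ‖x - y‖ * max ‖x‖ ‖y‖ ^ m := by ring

end Normed

section Gradient

variable {H : Type*} [NormedAddCommGroup H] [InnerProductSpace ℝ H] [CompleteSpace H]

theorem norm_gradient_eq_norm_fderiv (f : H → ℝ) (x : H) : ‖gradient f x‖ = ‖fderiv ℝ f x‖ :=
  LinearIsometryEquiv.norm_map _ _

theorem norm_gradient_sub_gradient (f : H → ℝ) (x y : H) :
    ‖gradient f x - gradient f y‖ = ‖fderiv ℝ f x - fderiv ℝ f y‖ := by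
  rw [gradient, gradient, ← map_sub, LinearIsometryEquiv.norm_map]

end Gradient

/-- **Bounds on the gradient of a cost whose first `k-1` derivatives vanish at `0`.**
If `C` is `C^k`, its derivatives of orders `1, …, k-1` vanish at `0`, and the `k`-th
derivative is uniformly bounded by `M` in operator norm, then
(1) `‖∇C(x)‖ ≤ M ‖x‖^{k-1}/(k-1)!` and
(2) `‖∇C(x) - ∇C(y)‖ ≤ (M/(k-2)!) ‖x - y‖ (max{‖x‖,‖y‖})^{k-2}`. -/
theorem gradient_bounds_from_kth_derivative
    (Pdim k : ℕ) (hk : 2 ≤ k)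
    (C : EuclideanSpace ℝ (Fin Pdim) → ℝ)
    (hC : ContDiff ℝ k C)
    (hvanish : ∀ n : ℕ, 1 ≤ n → n ≤ k - 1 → iteratedFDeriv ℝ n C 0 = 0)
    (M : ℝ)
    (hM : ∀ x, ‖iteratedFDeriv ℝ k C x‖ ≤ M) :
    ∀ x y : EuclideanSpace ℝ (Fin Pdim),
      ‖gradient C x‖ ≤ M * ‖x‖ ^ (k - 1) / ((k - 1).factorial : ℝ) ∧
      ‖gradient C x - gradient C y‖ ≤
        (M / ((k - 2).factorial : ℝ)) * ‖x - y‖ * max ‖x‖ ‖y‖ ^ (k - 2) := by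
  have hD : ∀ n, 1 ≤ n → n ≤ k → ∀ z,
      ‖iteratedFDeriv ℝ n C z‖ ≤ M * ‖z‖ ^ (k - n) / (k - n).factorial := fun n hn hnk => by
    have hnk' : n + (k - n) = k := by omega
    exact norm_iteratedFDeriv_le_of_iteratedFDeriv_eq_zero (k - n) n (by rwa [hnk'])
      (fun i hi hik => hvanish i (by omega) (by omega)) (by rwa [hnk'])
  intro x y
  constructor
  · simpa [norm_gradient_eq_norm_fderiv] using hD 1 le_rfl (by omega) x
  · rw [norm_gradient_sub_gradient]
    refine norm_sub_le_of_norm_fderiv_le_mul_pow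
      ((hC.fderiv_right (m := 1) (by exact_mod_cast hk)).differentiable one_ne_zero)
      (div_nonneg ((norm_nonneg _).trans (hM 0)) (Nat.cast_nonneg _)) (fun z => ?_) x y
    rw [← norm_iteratedFDeriv_one, norm_iteratedFDeriv_fderiv, div_mul_eq_mul_div]
    exact hD 2 one_le_two hk z
end
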